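/- arXiv:0906.1839 — 6 statements merged into one kernel-verified Lean document; each statement's English description precedes it below -/
import Mathlib

section
/- For 0 < q < p < 1, the total variation distance between the geometric distributions with success probabilities p and q equals sup over k ≥ 1 of |(1-p)^k - (1-q)^k|. -/
/-- The pmf of the geometric distribution on `{1,2,...}` with success probability `p`:
`P(X = k) = p (1-p)^{k-1}` for `k ≥ 1`. -/
def geomPMF (p : ℝ) (k : ℕ) : ℝ := if k = 0 then 0 else p * (1 - p) ^ (k - 1)

lemma geomPMF_succ (p : ℝ) (k : ℕ) : geomPMF p (k + 1) = p * (1 - p) ^ k := by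
  simp [geomPMF]

lemma geomPMF_summable {p : ℝ} (h0 : 0 < p) (h1 : p < 1) : Summable (geomPMF p) := by
  rw [← summable_nat_add_iff 1]
  simp only [geomPMF_succ]
  exact (summable_geometric_of_lt_one (by linarith) (by linarith)).mul_left p

lemma geomPMF_tsum {p : ℝ} (h0 : 0 < p) (h1 : p < 1) : ∑' k, geomPMF p k = 1 := by
  have hs := geomPMF_summable h0 h1
  rw [← Summable.sum_add_tsum_nat_add 1 hs]
  simp only [geomPMF_succ]
  rw [tsum_mul_left, tsum_geometric_of_lt_one (by linarith) (by linarith)]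
  have : (1 : ℝ) - (1 - p) = p := by ring
  rw [this]
  simp [geomPMF, mul_inv_cancel₀ (ne_of_gt h0)]

lemma geomPMF_tail {p : ℝ} (h0 : 0 < p) (h1 : p < 1) (N : ℕ) :
    ∑' k : (Set.Ici (N + 1) : Set ℕ), geomPMF p k = (1 - p) ^ N := by
  rw [tsum_subtype]
  have hs : Summable ((Set.Ici (N + 1) : Set ℕ).indicator (geomPMF p)) :=
    (geomPMF_summable h0 h1).indicator _
  rw [← Summable.sum_add_tsum_nat_add (N + 1) hs]
  have hz : ∀ i ∈ Finset.range (N + 1),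
      (Set.Ici (N + 1) : Set ℕ).indicator (geomPMF p) i = 0 := by
    intro i hi
    rw [Set.indicator_of_notMem]
    simp only [Finset.mem_range] at hi
    simp only [Set.mem_Ici, not_le]
    omega
  rw [Finset.sum_eq_zero hz, zero_add]
  have ht : ∀ i : ℕ, (Set.Ici (N + 1) : Set ℕ).indicator (geomPMF p) (i + (N + 1)) =
      ((1 - p) ^ N * p) * (1 - p) ^ i := by
    intro i
    rw [Set.indicator_of_mem (by simp only [Set.mem_Ici]; omega)]
    have : i + (N + 1) = (i + N) + 1 := by omega
    rw [this, geomPMF_succ, pow_add]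
    ring
  simp only [ht]
  rw [tsum_mul_left, tsum_geometric_of_lt_one (by linarith) (by linarith)]
  have : (1 : ℝ) - (1 - p) = p := by ring
  rw [this]
  field_simp

lemma geom_telescope (p q : ℝ) (N : ℕ) :
    ∑ k ∈ Finset.range N, (p * (1 - p) ^ k - q * (1 - q) ^ k) = (1 - q) ^ N - (1 - p) ^ N := by
  induction N with
  | zero => simp
  | succ n ih => rw [Finset.sum_range_succ, ih]; ring

/-- For `0 < q < p < 1`, the total variation distance between `Geom(p)` and `Geom(q)`,
i.e. the supremum over all sets `A ⊆ ℕ` of `|Geom(p)(A) - Geom(q)(A)|`, equals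
`sup_{k ≥ 1} |(1-p)^k - (1-q)^k|`. -/
theorem tv_geom_eq_sup (p q : ℝ) (hq : 0 < q) (hqp : q < p) (hp : p < 1) :
    (⨆ A : Set ℕ, |∑' k : A, (geomPMF p k - geomPMF q k)|) =
      ⨆ k : ℕ, |(1 - p) ^ (k + 1) - (1 - q) ^ (k + 1)| := by
  have hp0 : 0 < p := lt_trans hq hqp
  have hq1 : q < 1 := lt_trans hqp hp
  set f : ℕ → ℝ := fun k => geomPMF p k - geomPMF q k with hfdef
  have hf0 : f 0 = 0 := by simp [hfdef, geomPMF]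
  have hfsucc : ∀ k, f (k + 1) = p * (1 - p) ^ k - q * (1 - q) ^ k := by
    intro k; simp [hfdef, geomPMF_succ]
  have hfs : Summable f := (geomPMF_summable hp0 hp).sub (geomPMF_summable hq hq1)
  have hftsum : ∑' k, f k = 0 := by
    rw [hfdef, Summable.tsum_sub (geomPMF_summable hp0 hp) (geomPMF_summable hq hq1),
      geomPMF_tsum hp0 hp, geomPMF_tsum hq hq1, sub_self]
  -- existence of a sign change
  have hE : ∃ n, f (n + 1) ≤ 0 := by
    have hr0 : (0 : ℝ) ≤ (1 - p) / (1 - q) := by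
      apply div_nonneg <;> linarith
    have hr1 : (1 - p) / (1 - q) < 1 := (div_lt_one (by linarith)).2 (by linarith)
    obtain ⟨n, hn⟩ := ((tendsto_pow_atTop_nhds_zero_of_lt_one hr0 hr1).eventually
      (gt_mem_nhds (show (0 : ℝ) < q / p by positivity))).exists
    refine ⟨n, ?_⟩
    rw [hfsucc]
    have he : (1 - p) ^ n = ((1 - p) / (1 - q)) ^ n * (1 - q) ^ n := by
      rw [div_pow, div_mul_cancel₀]
      exact pow_ne_zero _ (by linarith)
    have hpow : (0 : ℝ) < (1 - q) ^ n := pow_pos (by linarith) n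
    have : p * ((1 - p) / (1 - q)) ^ n < q := by
      rw [lt_div_iff₀ hp0] at hn; linarith [hn]
    nlinarith [mul_lt_mul_of_pos_right this hpow]
  set N := Nat.find hE with hNdef
  have hNspec : f (N + 1) ≤ 0 := Nat.find_spec hE
  have hN1 : 1 ≤ N := by
    rcases Nat.eq_zero_or_pos N with h | h
    · exfalso
      have := hNspec
      rw [h, hfsucc] at this
      simp at this
      linarith
    · exact h
  have hpos : ∀ k < N, 0 < f (k + 1) := by
    intro k hk
    exact lt_of_not_ge fun h => Nat.find_min hE hk h
  have hstep : ∀ k, f (k + 1) ≤ 0 → f (k + 2) ≤ 0 := by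
    intro k h
    rw [hfsucc] at h
    have h2 : f (k + 2) = p * (1 - p) ^ (k + 1) - q * (1 - q) ^ (k + 1) := hfsucc (k + 1)
    rw [h2]
    simp only [pow_succ]
    have hq0 : (0 : ℝ) ≤ (1 - q) ^ k := pow_nonneg (by linarith) k
    nlinarith [mul_le_mul_of_nonneg_right (sub_nonpos.mp h) (show (0:ℝ) ≤ 1 - p by linarith),
      mul_le_mul_of_nonneg_left (show (1:ℝ) - p ≤ 1 - q by linarith)
        (mul_nonneg hq.le hq0)]
  have hneg : ∀ k, N ≤ k → f (k + 1) ≤ 0 := by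
    intro k hk
    induction k, hk using Nat.le_induction with
    | base => exact hNspec
    | succ n hn ih => exact hstep n ih
  -- the crossing value
  set g : ℝ := (1 - q) ^ N - (1 - p) ^ N with hgdef
  have hg0 : 0 ≤ g := by
    have := pow_le_pow_left₀ (show (0:ℝ) ≤ 1 - p by linarith) (show (1:ℝ) - p ≤ 1 - q by linarith) N
    simpa [hgdef] using this
  -- positive and negative parts
  set fplus : ℕ → ℝ := fun k => max (f k) 0 with hfplusdef
  set fminus : ℕ → ℝ := fun k => max (-f k) 0 with hfminusdef
  have hfminus_eq : ∀ k, fminus k = fplus k - f k := by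
    intro k
    rcases le_total (f k) 0 with h | h
    · simp [hfplusdef, hfminusdef, max_eq_left (neg_nonneg.2 h), max_eq_right h]
    · simp [hfminusdef, hfplusdef, max_eq_right (neg_nonpos.2 h), max_eq_left h]
  have hfplus_zero : ∀ k ∉ Finset.range (N + 1), fplus k = 0 := by
    intro k hk
    simp only [Finset.mem_range, not_lt] at hk
    have : f k ≤ 0 := by
      obtain ⟨j, rfl⟩ : ∃ j, k = j + 1 := ⟨k - 1, by omega⟩
      exact hneg j (by omega)
    simp [hfplusdef, max_eq_right this]
  have hfplus_summable : Summable fplus := summable_of_ne_finset_zero hfplus_zero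
  have hfminus_summable : Summable fminus := by
    have : fminus = fun k => fplus k - f k := funext hfminus_eq
    rw [this]
    exact hfplus_summable.sub hfs
  have htsum_fplus : ∑' k, fplus k = g := by
    rw [tsum_eq_sum hfplus_zero]
    have : ∀ k ∈ Finset.range (N + 1), fplus k = f k := by
      intro k hk
      simp only [Finset.mem_range] at hk
      rcases k with _ | j
      · show max (f 0) 0 = f 0; rw [hf0]; simp
      · exact max_eq_left (le_of_lt (hpos j (by omega)))
    rw [Finset.sum_congr rfl this, Finset.sum_range_succ']
    have e0 : geomPMF p 0 - geomPMF q 0 = 0 := by simp [geomPMF]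
    rw [e0, add_zero, hgdef, ← geom_telescope p q N]
    refine Finset.sum_congr rfl fun i _ => ?_
    simp [geomPMF_succ]
  have htsum_fminus : ∑' k, fminus k = g := by
    calc ∑' k, fminus k = ∑' k, (fplus k - f k) := tsum_congr hfminus_eq
      _ = (∑' k, fplus k) - ∑' k, f k := Summable.tsum_sub hfplus_summable hfs
      _ = g := by rw [htsum_fplus, hftsum, sub_zero]
  -- the universal upper bound
  have hupper : ∀ A : Set ℕ, |∑' k : A, f k| ≤ g := by
    intro A
    have hsubA : Summable (fun k : A => f k) := hfs.subtype A
    have hplusA : Summable (fun k : A => fplus k) := hfplus_summable.subtype A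
    have hminusA : Summable (fun k : A => fminus k) := hfminus_summable.subtype A
    have h1 : ∑' k : A, f k ≤ g := by
      calc ∑' k : A, f k ≤ ∑' k : A, fplus k :=
            Summable.tsum_le_tsum (fun k => le_max_left _ _) hsubA hplusA
        _ = ∑' k, A.indicator fplus k := tsum_subtype A fplus
        _ ≤ ∑' k, fplus k := by
            refine Summable.tsum_le_tsum (fun k => ?_) (hfplus_summable.indicator A) hfplus_summable
            exact Set.indicator_le_self' (fun x _ => le_max_right _ _) k
        _ = g := htsum_fplus
    have h2 : -(∑' k : A, f k) ≤ g := by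
      rw [← tsum_neg]
      calc ∑' k : A, -f k ≤ ∑' k : A, fminus k :=
            Summable.tsum_le_tsum (fun k => le_max_left _ _) hsubA.neg hminusA
        _ = ∑' k, A.indicator fminus k := tsum_subtype A fminus
        _ ≤ ∑' k, fminus k := by
            refine Summable.tsum_le_tsum (fun k => ?_) (hfminus_summable.indicator A) hfminus_summable
            exact Set.indicator_le_self' (fun x _ => le_max_right _ _) k
        _ = g := htsum_fminus
    exact abs_le.2 ⟨by linarith, h1⟩
  -- the tail sets realize the RHS values
  have htail : ∀ n : ℕ, ∑' k : (Set.Ici (n + 1 + 1) : Set ℕ), f k =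
      (1 - p) ^ (n + 1) - (1 - q) ^ (n + 1) := by
    intro n
    have : ∑' k : (Set.Ici (n + 1 + 1) : Set ℕ), f k =
        (∑' k : (Set.Ici (n + 1 + 1) : Set ℕ), geomPMF p k) -
          ∑' k : (Set.Ici (n + 1 + 1) : Set ℕ), geomPMF q k :=
      Summable.tsum_sub ((geomPMF_summable hp0 hp).subtype _) ((geomPMF_summable hq hq1).subtype _)
    rw [this, geomPMF_tail hp0 hp (n + 1), geomPMF_tail hq hq1 (n + 1)]
  have hbddL : BddAbove (Set.range fun A : Set ℕ => |∑' k : A, (geomPMF p k - geomPMF q k)|) := by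
    refine ⟨g, ?_⟩
    rintro _ ⟨A, rfl⟩
    exact hupper A
  have hbddR : BddAbove (Set.range fun k : ℕ => |(1 - p) ^ (k + 1) - (1 - q) ^ (k + 1)|) := by
    refine ⟨1, ?_⟩
    rintro _ ⟨k, rfl⟩
    have h1 : (0:ℝ) ≤ (1 - p) ^ (k + 1) := pow_nonneg (by linarith) _
    have h2 : (1 - p) ^ (k + 1) ≤ 1 := pow_le_one₀ (by linarith) (by linarith)
    have h3 : (0:ℝ) ≤ (1 - q) ^ (k + 1) := pow_nonneg (by linarith) _
    have h4 : (1 - q) ^ (k + 1) ≤ 1 := pow_le_one₀ (by linarith) (by linarith)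
    rw [abs_le]
    constructor <;> linarith
  apply le_antisymm
  · apply ciSup_le
    intro A
    have hgN : g = |(1 - p) ^ ((N - 1) + 1) - (1 - q) ^ ((N - 1) + 1)| := by
      have hNN : (N - 1) + 1 = N := by omega
      rw [hNN, abs_sub_comm, abs_of_nonneg hg0]
    calc |∑' k : A, (geomPMF p k - geomPMF q k)| ≤ g := hupper A
      _ = |(1 - p) ^ ((N - 1) + 1) - (1 - q) ^ ((N - 1) + 1)| := hgN
      _ ≤ ⨆ k : ℕ, |(1 - p) ^ (k + 1) - (1 - q) ^ (k + 1)| := le_ciSup hbddR (N - 1)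
  · apply ciSup_le
    intro n
    have := htail n
    calc |(1 - p) ^ (n + 1) - (1 - q) ^ (n + 1)|
        = |∑' k : (Set.Ici (n + 1 + 1) : Set ℕ), (geomPMF p k - geomPMF q k)| := by rw [this]
      _ ≤ ⨆ A : Set ℕ, |∑' k : A, (geomPMF p k - geomPMF q k)| :=
          le_ciSup hbddL (Set.Ici (n + 1 + 1))
end

section
/- For any n ∈ ℕ and q ∈ [0,1], the total variation distance between the Binomial(n, q) distribution and the Poisson(nq) distribution is at most min(q, nq²). -/
/-!
Stein–Chen method. Let `r = n q`. For a finite set `A`, the solution `f` (with `f 0 = 0`) of the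
Poisson Stein equation `r f (k + 1) - k f k = 1_A k - Po(r)(A)` is the sum over `j ∈ A` of the
solutions for `{j}`. The increments of the solution for `{j}` are nonpositive except the one
from `f j` to `f (j + 1)`, and log-concavity of the Poisson weights bounds that one by
`(1 - e^{-r}) / r`; hence every increment of `f` is at most `(1 - e^{-r}) / r`.

For `W ~ Bin(n, q)` and `W' ~ Bin(n - 1, q)`, Pascal's rule gives
`E[r f (W + 1) - W f W] = n q² E[f (W' + 2) - f (W' + 1)]`. With `A = {Bin(n, q) > Po(r)}` the
left side is the total variation distance, which is therefore at most
`n q² (1 - e^{-r}) / r = q (1 - e^{-nq}) ≤ min q (n q²)`.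
-/

open Finset Real
open scoped Nat

namespace SteinChen

lemma half_tsum_abs_sub_eq_sum_filter {α : Type*} (b p : α → ℝ) (s : Finset α)
    (hb : ∀ k ∉ s, b k = 0) (hp0 : ∀ k, 0 ≤ p k) (hp : Summable p)
    (hsum : ∑ k ∈ s, b k = ∑' k, p k) :
    (1 / 2) * ∑' k, |b k - p k| = ∑ k ∈ s with p k < b k, (b k - p k) := by
  have hbs : Summable b := summable_of_ne_finset_zero hb
  have hmax : ∀ k ∉ s, max (b k - p k) 0 = 0 := fun k hk => by
    rw [hb k hk]; exact max_eq_right (by linarith [hp0 k])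
  have habs (k : α) : |b k - p k| = 2 * max (b k - p k) 0 + (p k - b k) := by
    rcases le_total (b k) (p k) with h | h
    · rw [abs_of_nonpos (by linarith), max_eq_right (by linarith)]; ring
    · rw [abs_of_nonneg (by linarith), max_eq_left (by linarith)]; ring
  rw [tsum_congr habs, (summable_of_ne_finset_zero hmax).mul_left 2 |>.tsum_add (hp.sub hbs),
    tsum_mul_left, tsum_eq_sum hmax, hp.tsum_sub hbs, tsum_eq_sum hb, ← hsum, sub_self, add_zero,
    ← mul_assoc, one_div, inv_mul_cancel₀ two_ne_zero, one_mul, sum_filter]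
  refine sum_congr rfl fun k _ => ?_
  split_ifs with h
  · exact max_eq_left (by linarith)
  · exact max_eq_right (by linarith [not_lt.mp h])

noncomputable def poissonProb (r : ℝ) (k : ℕ) : ℝ := exp (-r) * r ^ k / k !

noncomputable def poissonCDF (r : ℝ) (k : ℕ) : ℝ := ∑ i ∈ range (k + 1), poissonProb r i

section Poisson

variable {r : ℝ}

lemma poissonProb_nonneg (hr : 0 ≤ r) (k : ℕ) : 0 ≤ poissonProb r k := by
  unfold poissonProb; positivity

lemma poissonProb_pos (hr : 0 < r) (k : ℕ) : 0 < poissonProb r k := by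
  unfold poissonProb; positivity

lemma poissonProb_zero (r : ℝ) : poissonProb r 0 = exp (-r) := by
  simp [poissonProb]

lemma poissonProb_succ (r : ℝ) (k : ℕ) :
    poissonProb r (k + 1) = r / (k + 1) * poissonProb r k := by
  simp only [poissonProb, Nat.factorial_succ, Nat.cast_mul, pow_succ]
  push_cast
  field_simp

lemma hasSum_poissonProb (r : ℝ) : HasSum (poissonProb r) 1 := by
  have h := (NormedSpace.expSeries_div_hasSum_exp r).mul_left (exp (-r))
  rw [← exp_eq_exp_ℝ, ← exp_add, neg_add_cancel, exp_zero] at h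
  show HasSum (fun k => exp (-r) * r ^ k / k !) 1
  simpa only [mul_div_assoc] using h

lemma one_sub_poissonCDF (r : ℝ) (k : ℕ) :
    1 - poissonCDF r k = ∑' i, poissonProb r (i + (k + 1)) := by
  rw [← (hasSum_poissonProb r).tsum_eq,
    ← (hasSum_poissonProb r).summable.sum_add_tsum_nat_add (k + 1), poissonCDF,
    add_sub_cancel_left]

/-- Log-concavity of the Poisson weights: their ratios `r / (k + 1)` decrease. -/
lemma poissonProb_succ_mul_le (hr : 0 ≤ r) {i k : ℕ} (hki : k ≤ i) :
    poissonProb r (i + 1) * poissonProb r k ≤ poissonProb r i * poissonProb r (k + 1) := by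
  have hratio : r / (i + 1) ≤ r / (k + 1) := by gcongr
  have hprod : 0 ≤ poissonProb r i * poissonProb r k :=
    mul_nonneg (poissonProb_nonneg hr i) (poissonProb_nonneg hr k)
  rw [poissonProb_succ, poissonProb_succ]
  nlinarith

lemma poissonProb_succ_mul_poissonCDF_div_le (hr : 0 < r) (k : ℕ) :
    poissonProb r (k + 1) * (poissonCDF r k / poissonProb r k) ≤
      poissonCDF r (k + 1) - poissonProb r 0 := by
  have hshift : poissonCDF r (k + 1) - poissonProb r 0 =
      ∑ i ∈ range (k + 1), poissonProb r (i + 1) := by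
    rw [poissonCDF, sum_range_succ', add_sub_cancel_right]
  rw [mul_div_assoc', div_le_iff₀ (poissonProb_pos hr k), hshift, poissonCDF, mul_sum, sum_mul]
  refine sum_le_sum fun i hi => ?_
  rw [mul_comm (poissonProb r (i + 1))]
  exact poissonProb_succ_mul_le hr.le (Nat.lt_succ_iff.mp (mem_range.mp hi))

lemma poissonCDF_div_le (hr : 0 < r) (k : ℕ) :
    poissonCDF r k / poissonProb r k ≤ poissonCDF r (k + 1) / poissonProb r (k + 1) := by
  rw [le_div_iff₀ (poissonProb_pos hr _), mul_comm]
  linarith [poissonProb_succ_mul_poissonCDF_div_le hr k, poissonProb_pos hr 0]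

lemma one_sub_poissonCDF_succ_div_le (hr : 0 < r) (k : ℕ) :
    (1 - poissonCDF r (k + 1)) / poissonProb r (k + 1) ≤
      (1 - poissonCDF r k) / poissonProb r k := by
  have hsum (m : ℕ) : Summable fun i => poissonProb r (i + m) :=
    (summable_nat_add_iff m).mpr (hasSum_poissonProb r).summable
  rw [div_le_div_iff₀ (poissonProb_pos hr _) (poissonProb_pos hr _), one_sub_poissonCDF,
    one_sub_poissonCDF, ← tsum_mul_right, ← tsum_mul_right]
  refine Summable.tsum_le_tsum (fun i => ?_) ((hsum _).mul_right _) ((hsum _).mul_right _)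
  rw [show i + (k + 1 + 1) = i + (k + 1) + 1 by ring]
  exact poissonProb_succ_mul_le hr.le (by omega)

end Poisson

noncomputable def poissonCenteredIndicator (r : ℝ) (A : Finset ℕ) (i : ℕ) : ℝ :=
  (if i ∈ A then 1 else 0) - ∑ j ∈ A, poissonProb r j

noncomputable def steinSolution (r : ℝ) (g : ℕ → ℝ) : ℕ → ℝ
  | 0 => 0
  | k + 1 => (∑ i ∈ range (k + 1), poissonProb r i * g i) / (r * poissonProb r k)

section Stein

variable {r : ℝ}

lemma steinSolution_spec (hr : 0 < r) (g : ℕ → ℝ) (k : ℕ) :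
    r * steinSolution r g (k + 1) - k * steinSolution r g k = g k := by
  have hp := poissonProb_pos hr
  cases k with
  | zero =>
    simp only [steinSolution, zero_add, range_one, sum_singleton, CharP.cast_eq_zero, zero_mul,
      sub_zero]
    field_simp [(hp 0).ne']
  | succ k =>
    have hrec : r * poissonProb r k = (k + 1) * poissonProb r (k + 1) := by
      rw [poissonProb_succ]; field_simp
    simp only [steinSolution]
    rw [sum_range_succ _ (k + 1), hrec]
    push_cast
    field_simp [(hp k).ne', (hp (k + 1)).ne']
    ring

lemma steinSolution_sum {ι : Type*} (s : Finset ι) (g : ι → ℕ → ℝ) (k : ℕ) :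
    steinSolution r (fun i => ∑ j ∈ s, g j i) k = ∑ j ∈ s, steinSolution r (g j) k := by
  cases k with
  | zero => simp [steinSolution]
  | succ k => simp only [steinSolution, mul_sum]; rw [sum_comm, sum_div]

lemma steinSolution_singleton_succ (r : ℝ) (j k : ℕ) :
    steinSolution r (poissonCenteredIndicator r {j}) (k + 1) =
      poissonProb r j / r * if j ≤ k then (1 - poissonCDF r k) / poissonProb r k
        else -(poissonCDF r k / poissonProb r k) := by
  simp only [steinSolution, poissonCenteredIndicator, mem_singleton, sum_singleton, mul_sub,
    sum_sub_distrib, mul_ite, mul_one, mul_zero, sum_ite_eq', mem_range, ← sum_mul,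
    Nat.lt_succ_iff, poissonCDF]
  split_ifs <;> ring

lemma steinSolution_singleton_increment_le (hr : 0 < r) (j k : ℕ) :
    steinSolution r (poissonCenteredIndicator r {j}) (k + 2) -
        steinSolution r (poissonCenteredIndicator r {j}) (k + 1) ≤
      if j = k + 1 then (1 - exp (-r)) / r else 0 := by
  have hpj : 0 ≤ poissonProb r j / r := (div_pos (poissonProb_pos hr j) hr).le
  rw [steinSolution_singleton_succ, steinSolution_singleton_succ, ← mul_sub]
  rcases lt_trichotomy j (k + 1) with hj | rfl | hj
  · rw [if_pos (by omega), if_pos (by omega), if_neg hj.ne]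
    exact mul_nonpos_of_nonneg_of_nonpos hpj
      (sub_nonpos.mpr (one_sub_poissonCDF_succ_div_le hr k))
  · have htail : poissonProb r (k + 1) * ((1 - poissonCDF r (k + 1)) / poissonProb r (k + 1)) =
        1 - poissonCDF r (k + 1) := mul_div_cancel₀ _ (poissonProb_pos hr (k + 1)).ne'
    rw [if_pos le_rfl, if_neg (by omega), if_pos rfl, div_mul_eq_mul_div, sub_neg_eq_add, mul_add,
      htail, ← poissonProb_zero]
    gcongr
    linarith [poissonProb_succ_mul_poissonCDF_div_le hr k]
  · rw [if_neg (by omega), if_neg (by omega), if_neg hj.ne']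
    exact mul_nonpos_of_nonneg_of_nonpos hpj (by linarith [poissonCDF_div_le hr k])

lemma steinSolution_increment_le (hr : 0 < r) (A : Finset ℕ) (k : ℕ) :
    steinSolution r (poissonCenteredIndicator r A) (k + 2) -
        steinSolution r (poissonCenteredIndicator r A) (k + 1) ≤ (1 - exp (-r)) / r := by
  have hsplit : poissonCenteredIndicator r A =
      fun i => ∑ j ∈ A, poissonCenteredIndicator r {j} i := by
    funext i
    simp only [poissonCenteredIndicator, mem_singleton, sum_singleton, sum_sub_distrib,
      sum_ite_eq]
  have hfactor : 0 ≤ (1 - exp (-r)) / r :=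
    div_nonneg (sub_nonneg.mpr (exp_le_one_iff.mpr (neg_nonpos.mpr hr.le))) hr.le
  rw [hsplit, steinSolution_sum, steinSolution_sum, ← sum_sub_distrib]
  calc _ ≤ ∑ j ∈ A, if j = k + 1 then (1 - exp (-r)) / r else 0 :=
        sum_le_sum fun j _ => steinSolution_singleton_increment_le hr j k
    _ ≤ (1 - exp (-r)) / r := by
        rw [sum_ite_eq']
        split_ifs
        exacts [le_rfl, hfactor]

end Stein

noncomputable def binomialProb (n : ℕ) (q : ℝ) (k : ℕ) : ℝ :=
  n.choose k * q ^ k * (1 - q) ^ (n - k)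

section Binomial

variable {q : ℝ}

lemma binomialProb_nonneg (hq0 : 0 ≤ q) (hq1 : q ≤ 1) (n k : ℕ) :
    0 ≤ binomialProb n q k := by
  have : 0 ≤ 1 - q := sub_nonneg.mpr hq1
  unfold binomialProb; positivity

lemma binomialProb_eq_zero_of_lt {n k : ℕ} (h : n < k) (q : ℝ) : binomialProb n q k = 0 := by
  simp [binomialProb, Nat.choose_eq_zero_of_lt h]

lemma sum_binomialProb (n : ℕ) (q : ℝ) : ∑ k ∈ range (n + 1), binomialProb n q k = 1 := by
  have h := (add_pow q (1 - q) n).symm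
  rw [add_sub_cancel, one_pow] at h
  rw [← h]
  exact sum_congr rfl fun k _ => by rw [binomialProb]; ring

lemma binomialProb_eq_poissonProb_of_mul_eq_zero {n : ℕ} (h : (n : ℝ) * q = 0) (k : ℕ) :
    binomialProb n q k = poissonProb (n * q) k := by
  rcases mul_eq_zero.mp h with hn | rfl
  · obtain rfl : n = 0 := by exact_mod_cast hn
    cases k <;> simp [binomialProb, poissonProb]
  · cases k <;> simp [binomialProb, poissonProb]

lemma binomialProb_succ_zero (n : ℕ) (q : ℝ) :
    binomialProb (n + 1) q 0 = (1 - q) * binomialProb n q 0 := by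
  simp [binomialProb, pow_succ, mul_comm]

lemma binomialProb_succ_succ (n : ℕ) (q : ℝ) (k : ℕ) :
    binomialProb (n + 1) q (k + 1) =
      q * binomialProb n q k + (1 - q) * binomialProb n q (k + 1) := by
  simp only [binomialProb, Nat.choose_succ_succ', Nat.add_sub_add_right]
  rcases lt_or_ge k n with hk | hk
  · obtain ⟨d, rfl⟩ := Nat.exists_eq_add_of_lt hk
    rw [show k + d + 1 - k = d + 1 by omega, show k + d + 1 - (k + 1) = d by omega]
    push_cast
    ring
  · rw [Nat.choose_eq_zero_of_lt (by omega : n < k + 1), Nat.sub_eq_zero_of_le hk]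
    push_cast
    ring

lemma succ_mul_binomialProb_succ (n : ℕ) (q : ℝ) (k : ℕ) :
    (k + 1) * binomialProb (n + 1) q (k + 1) = (n + 1) * q * binomialProb n q k := by
  have hchoose :
      ((k : ℝ) + 1) * ((n + 1).choose (k + 1) : ℝ) = (n + 1) * (n.choose k : ℝ) := by
    rw [mul_comm]; exact_mod_cast (Nat.add_one_mul_choose_eq n k).symm
  simp only [binomialProb, Nat.add_sub_add_right]
  linear_combination q ^ (k + 1) * (1 - q) ^ (n - k) * hchoose

lemma sum_binomialProb_succ_mul (n : ℕ) (q : ℝ) (h : ℕ → ℝ) :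
    ∑ k ∈ range (n + 2), binomialProb (n + 1) q k * h k =
      q * ∑ k ∈ range (n + 1), binomialProb n q k * h (k + 1) +
        (1 - q) * ∑ k ∈ range (n + 1), binomialProb n q k * h k := by
  have hshift : ∑ k ∈ range (n + 1), binomialProb n q (k + 1) * h (k + 1) +
      binomialProb n q 0 * h 0 = ∑ k ∈ range (n + 1), binomialProb n q k * h k := by
    rw [← sum_range_succ' (fun k => binomialProb n q k * h k), sum_range_succ,
      binomialProb_eq_zero_of_lt (Nat.lt_succ_self n), zero_mul, add_zero]
  rw [sum_range_succ', ← hshift, binomialProb_succ_zero]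
  simp only [binomialProb_succ_succ, add_mul, sum_add_distrib, mul_assoc, ← mul_sum]
  ring

lemma sum_binomialProb_succ_mul_self (n : ℕ) (q : ℝ) (h : ℕ → ℝ) :
    ∑ k ∈ range (n + 2), binomialProb (n + 1) q k * (k * h k) =
      (n + 1) * q * ∑ k ∈ range (n + 1), binomialProb n q k * h (k + 1) := by
  rw [sum_range_succ', mul_sum]
  simp only [Nat.cast_zero, zero_mul, mul_zero, add_zero, Nat.cast_succ]
  refine sum_congr rfl fun k _ => ?_
  linear_combination h (k + 1) * succ_mul_binomialProb_succ n q k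

lemma sum_binomialProb_mul_stein (n : ℕ) (q : ℝ) (h : ℕ → ℝ) :
    ∑ k ∈ range (n + 2), binomialProb (n + 1) q k * ((n + 1) * q * h (k + 1) - k * h k) =
      (n + 1) * q ^ 2 * ∑ k ∈ range (n + 1), binomialProb n q k * (h (k + 2) - h (k + 1)) := by
  have hsplit := sum_binomialProb_succ_mul n q (fun k => h (k + 1))
  have hself := sum_binomialProb_succ_mul_self n q h
  simp only [mul_sub, sum_sub_distrib] at hsplit hself ⊢
  simp only [mul_left_comm _ ((n + 1 : ℝ) * q), ← mul_sum] at hsplit ⊢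
  rw [hsplit, hself]
  ring

end Binomial

theorem sum_binomialProb_sub_poissonProb_le {q : ℝ} (hq0 : 0 < q) (hq1 : q ≤ 1) (m : ℕ)
    (A : Finset ℕ) :
    ∑ k ∈ A, (binomialProb (m + 1) q k - poissonProb ((m + 1) * q) k) ≤
      q * (1 - exp (-((m + 1) * q))) := by
  set r : ℝ := (m + 1) * q
  have hr : 0 < r := by positivity
  set f := steinSolution r (poissonCenteredIndicator r A)
  have hbinA : ∑ k ∈ range (m + 2) ∩ A, binomialProb (m + 1) q k =
      ∑ k ∈ A, binomialProb (m + 1) q k :=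
    sum_subset inter_subset_right fun k hkA hk =>
      binomialProb_eq_zero_of_lt (by simp [hkA] at hk; omega) q
  calc ∑ k ∈ A, (binomialProb (m + 1) q k - poissonProb r k)
      = ∑ k ∈ range (m + 2), binomialProb (m + 1) q k * poissonCenteredIndicator r A k := by
        rw [sum_sub_distrib]
        simp only [poissonCenteredIndicator, mul_sub, sum_sub_distrib, mul_ite, mul_one, mul_zero,
          sum_ite_mem, ← sum_mul, sum_binomialProb, one_mul, hbinA]
    _ = ∑ k ∈ range (m + 2), binomialProb (m + 1) q k * (r * f (k + 1) - k * f k) := by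
        simp only [f, steinSolution_spec hr]
    _ = (m + 1) * q ^ 2 * ∑ k ∈ range (m + 1), binomialProb m q k * (f (k + 2) - f (k + 1)) :=
        sum_binomialProb_mul_stein m q f
    _ ≤ (m + 1) * q ^ 2 * ∑ k ∈ range (m + 1), binomialProb m q k * ((1 - exp (-r)) / r) := by
        gcongr with k
        · exact binomialProb_nonneg hq0.le hq1 m k
        · exact steinSolution_increment_le hr A k
    _ = q * (1 - exp (-r)) := by
        rw [← sum_mul, sum_binomialProb]
        field_simp
        rfl

end SteinChen

open SteinChen Finset in
/-- Stein–Chen bound: the total variation distance between `Bin(n,q)` and `Po(nq)` is at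
most `min(q, n q²)`. -/
theorem tv_binomial_poisson (n : ℕ) (q : ℝ) (hq0 : 0 ≤ q) (hq1 : q ≤ 1) :
    (1 / 2) * ∑' k : ℕ,
        |(if k ≤ n then (n.choose k : ℝ) * q ^ k * (1 - q) ^ (n - k) else 0) -
          Real.exp (-(n * q)) * (n * q) ^ k / k.factorial| ≤
      min q (n * q ^ 2) := by
  have hterm (k : ℕ) : (if k ≤ n then (n.choose k : ℝ) * q ^ k * (1 - q) ^ (n - k) else 0) -
      Real.exp (-(n * q)) * (n * q) ^ k / k.factorial =
        binomialProb n q k - poissonProb (n * q) k := by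
    split_ifs with hk
    · rfl
    · rw [binomialProb_eq_zero_of_lt (not_le.mp hk), poissonProb]
  have hr0 : 0 ≤ (n : ℝ) * q := by positivity
  simp only [hterm]
  rw [half_tsum_abs_sub_eq_sum_filter _ _ (range (n + 1))
    (fun k hk => binomialProb_eq_zero_of_lt (by simpa using hk) q) (poissonProb_nonneg hr0)
    (hasSum_poissonProb _).summable (by rw [sum_binomialProb, (hasSum_poissonProb _).tsum_eq])]
  rcases hr0.eq_or_lt with hdeg | hr
  · simp only [binomialProb_eq_poissonProb_of_mul_eq_zero hdeg.symm, lt_self_iff_false,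
      filter_false, sum_empty]
    positivity
  have hq : 0 < q := hq0.lt_of_ne (by rintro rfl; simp at hr)
  obtain ⟨m, rfl⟩ : ∃ m, n = m + 1 := Nat.exists_eq_add_one.mpr (by by_contra! h; simp_all)
  push_cast
  have hexp_pos : 0 < Real.exp (-((m + 1) * q)) := Real.exp_pos _
  have hexp_ge : 1 - (m + 1) * q ≤ Real.exp (-((m + 1) * q)) := by
    linarith [Real.add_one_le_exp (-((m + 1) * q))]
  refine (sum_binomialProb_sub_poissonProb_le hq hq1 m _).trans (le_min ?_ ?_)
  · nlinarith
  · nlinarith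
end

section
/- Let T be the total progeny of a Galton–Watson branching process with offspring distribution Poisson(γ) for 0 < γ ≤ 1. Then P(|T| = t) = t^{t-1} (γ e^{-γ})^t / (γ · t!) for every integer t ≥ 1. -/
/-!
Explore the tree breadth-first, `X i` being the number of children of the `i`-th explored
individual. Then `|T| = t` exactly when `(X 0, …, X (t-1))` is a Łukasiewicz word: it sums to
`t - 1` and its partial sums `X 0 + ⋯ + X (s-1)` stay `≥ s` for `0 < s < t`. By the cycle lemma
every sequence of length `t` with sum `t - 1` has exactly one cyclic rotation that is a
Łukasiewicz word, and rotating does not change the probability of a sequence, so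
`P(|T| = t) = P(X 0 + ⋯ + X (t-1) = t - 1) / t` (the hitting time theorem). A sum of `t`
independent Poisson(γ) variables is Poisson(tγ), whence `P(|T| = t) = e^{-tγ} (tγ)^{t-1} / t!`.
-/

open MeasureTheory Finset

/-- After `s` exploration steps, `1 + x 0 + ⋯ + x (s-1) - s` individuals have been discovered but
not yet explored; the exploration is alive before `t` if this number stays positive. -/
def IsAliveBefore (t : ℕ) (x : ℕ → ℕ) : Prop :=
  ∀ s < t, 0 < s → s ≤ ∑ i ∈ range s, x i

instance (t : ℕ) : DecidablePred (IsAliveBefore t) := fun _ => by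
  unfold IsAliveBefore; infer_instance

theorem isAliveBefore_congr {t : ℕ} {x y : ℕ → ℕ} (h : ∀ n < t, x n = y n) :
    IsAliveBefore t x ↔ IsAliveBefore t y := by
  refine forall₃_congr fun s hst _ => ?_
  rw [sum_congr rfl fun n hn => h n ((mem_range.mp hn).trans hst)]

/-- The walk `x 0 + ⋯ + x (s-1) - s` moves down by at most one per step, so it cannot get below
`0` without passing through `-1`. -/
theorem forall_sum_range_ne_iff_isAliveBefore (t : ℕ) (x : ℕ → ℕ) :
    (∀ s < t, 0 < s → ∑ i ∈ range s, x i ≠ s - 1) ↔ IsAliveBefore t x := by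
  refine ⟨fun h => ?_, fun h s hst hs => by have := h s hst hs; omega⟩
  suffices ∀ s < t, s ≤ ∑ i ∈ range s, x i from fun s hst _ => this s hst
  intro s
  induction s with
  | zero => simp
  | succ s ih =>
    intro hst
    have hne := h (s + 1) hst s.succ_pos
    have hle := ih (by omega)
    rw [sum_range_succ] at hne ⊢
    omega

theorem Nat.sInf_eq_iff_isLeast {s : Set ℕ} {t : ℕ} (ht : t ≠ 0) :
    sInf s = t ↔ IsLeast s t := by
  refine ⟨fun h => ?_, IsLeast.csInf_eq⟩
  have hs : s.Nonempty := Nat.nonempty_of_pos_sInf (h ▸ Nat.pos_of_ne_zero ht)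
  exact h ▸ ⟨Nat.sInf_mem hs, fun _ => Nat.sInf_le⟩

theorem sInf_setOf_sum_range_eq_sub_one_eq_iff (x : ℕ → ℕ) {t : ℕ} (ht : 1 ≤ t) :
    sInf {s | 1 ≤ s ∧ ∑ i ∈ range s, x i = s - 1} = t ↔
      ∑ i ∈ range t, x i = t - 1 ∧ IsAliveBefore t x := by
  rw [Nat.sInf_eq_iff_isLeast (by omega), ← forall_sum_range_ne_iff_isAliveBefore]
  refine ⟨fun ⟨⟨_, hsum⟩, hleast⟩ => ⟨hsum, fun s hst hs heq => ?_⟩,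
    fun ⟨hsum, hfirst⟩ => ⟨⟨ht, hsum⟩, fun s ⟨hs, heq⟩ => ?_⟩⟩
  · exact absurd (hleast ⟨hs, heq⟩) (by omega)
  · by_contra! hst
    exact hfirst s hst hs heq

/-- The cycle lemma: the good index is the first minimum of `W` on `[0, t)`. -/
theorem cycle_lemma {t : ℕ} [NeZero t] (W : ℕ → ℤ) (hW : ∀ s, W (s + t) = W s - 1) :
    ∃! j : Fin t, ∀ s < t, 0 < s → W j ≤ W (j + s) := by
  obtain ⟨m, -, hm⟩ := exists_min_image univ (fun j : Fin t => W j) univ_nonempty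
  have hex : ∃ j, j < t ∧ W j = W m := ⟨m, m.isLt, rfl⟩
  obtain ⟨hjt, hjW⟩ := Nat.find_spec hex
  set j := Nat.find hex
  have hmin : ∀ k < t, W j ≤ W k := fun k hk => hjW ▸ hm ⟨k, hk⟩ (mem_univ _)
  have hfirst : ∀ k < j, W j < W k := fun k hk =>
    (hmin k (hk.trans hjt)).lt_of_ne fun h => Nat.find_min hex hk ⟨hk.trans hjt, h ▸ hjW⟩
  refine ⟨⟨j, hjt⟩, fun s hst hs => show W j ≤ W (j + s) from ?_, fun k hk => ?_⟩
  · rcases lt_or_ge (j + s) t with h | h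
    · exact hmin _ h
    · have hper := hW (j + s - t)
      rw [Nat.sub_add_cancel h] at hper
      have := hfirst (j + s - t) (by omega)
      omega
  · ext
    rcases lt_trichotomy (k : ℕ) j with h | h | h
    · have hle := hk (j - k) (by omega) (by omega)
      rw [Nat.add_sub_cancel' h.le] at hle
      have := hfirst k h
      omega
    · exact h
    · have hle := hk (j + t - k) (by omega) (by omega)
      rw [show (k : ℕ) + (j + t - k) = j + t by omega, hW] at hle
      have := hmin k k.isLt
      omega

theorem sum_eq_card_nsmul_sum_filter_of_existsUnique {α H M : Type*} [Fintype H]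
    [AddCommMonoid M] (s : Finset α) (ρ : H → α ≃ α) (hs : ∀ h a, ρ h a ∈ s ↔ a ∈ s)
    (f : α → M) (hf : ∀ h a, f (ρ h a) = f a) (p : α → Prop) [DecidablePred p]
    (hp : ∀ a ∈ s, ∃! h, p (ρ h a)) :
    ∑ a ∈ s, f a = Fintype.card H • ∑ a ∈ s with p a, f a := by
  calc ∑ a ∈ s, f a = ∑ a ∈ s, ∑ h, if p (ρ h a) then f (ρ h a) else 0 := by
        refine sum_congr rfl fun a ha => ?_
        obtain ⟨h₀, hh₀, huniq⟩ := hp a ha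
        rw [Fintype.sum_eq_single h₀ fun h hne => if_neg fun hph => hne (huniq h hph),
          if_pos hh₀, hf]
    _ = ∑ h, ∑ a ∈ s, if p (ρ h a) then f (ρ h a) else 0 := sum_comm
    _ = ∑ _h : H, ∑ a ∈ s, if p a then f a else 0 :=
        Fintype.sum_congr _ _ fun h => sum_equiv (ρ h) (fun a => (hs h a).symm) fun _ _ => rfl
    _ = Fintype.card H • ∑ a ∈ s with p a, f a := by
        rw [sum_const, card_univ, sum_filter]

section Rotation

-- `(n : Fin t)` is `n % t`, so `fun n : ℕ => c n` is the periodic extension of `c : Fin t → ℕ`.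
open Fin.NatCast

/-- The offspring sequences, in breadth-first order, of the plane trees with `t` vertices. -/
def lukasiewiczWords (t : ℕ) [NeZero t] : Finset (Fin t → ℕ) :=
  {c ∈ piAntidiag (univ : Finset (Fin t)) (t - 1) | IsAliveBefore t fun n => c n}

variable {t : ℕ} [NeZero t]

theorem sum_range_add_rotate (c : Fin t → ℕ) (j : Fin t) (s : ℕ) :
    ∑ n ∈ range (j + s), c n = ∑ n ∈ range j, c n + ∑ n ∈ range s, c (n + j) := by
  rw [sum_range_add]
  congr 1
  refine sum_congr rfl fun n _ => ?_
  rw [Nat.cast_add, Fin.cast_val_eq_self, add_comm]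

theorem sum_range_add_period (c : Fin t → ℕ) (s : ℕ) :
    ∑ n ∈ range (s + t), c n = ∑ n ∈ range s, c n + ∑ i, c i := by
  rw [sum_range_add, ← Fin.sum_univ_eq_sum_range (fun n => c ↑(s + n))]
  simp only [Nat.cast_add, Fin.cast_val_eq_self]
  congr 1
  exact Equiv.sum_comp (Equiv.addLeft (s : Fin t)) c

theorem existsUnique_isAliveBefore_rotate (c : Fin t → ℕ) (hc : ∑ i, c i = t - 1) :
    ∃! j : Fin t, IsAliveBefore t fun n => c (n + j) := by
  let W : ℕ → ℤ := fun s => (∑ n ∈ range s, c n : ℕ) - s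
  have hW : ∀ s, W (s + t) = W s - 1 := by
    intro s
    simp only [W, sum_range_add_period, hc]
    have := NeZero.pos t
    push_cast
    omega
  have hrot : ∀ j : Fin t, (IsAliveBefore t fun n => c (n + j)) ↔
      ∀ s < t, 0 < s → W j ≤ W (j + s) := fun j => by
    refine forall₃_congr fun s _ _ => ?_
    simp only [W, sum_range_add_rotate, Nat.cast_add]
    omega
  simpa only [hrot] using cycle_lemma W hW

theorem sum_piAntidiag_eq_nsmul_sum_lukasiewiczWords {R : Type*} [CommSemiring R] (f : ℕ → R) :
    ∑ c ∈ piAntidiag (univ : Finset (Fin t)) (t - 1), ∏ i, f (c i) =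
      t • ∑ c ∈ lukasiewiczWords t, ∏ i, f (c i) := by
  let rotate (j : Fin t) : (Fin t → ℕ) ≃ (Fin t → ℕ) :=
    (Equiv.addRight j).symm.arrowCongr (Equiv.refl ℕ)
  have hsum (j : Fin t) (c : Fin t → ℕ) : ∑ i, rotate j c i = ∑ i, c i :=
    Equiv.sum_comp (Equiv.addRight j) c
  have hprod (j : Fin t) (c : Fin t → ℕ) : ∏ i, f (rotate j c i) = ∏ i, f (c i) :=
    Equiv.prod_comp (Equiv.addRight j) (f ∘ c)
  have hmem (j : Fin t) (c : Fin t → ℕ) :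
      rotate j c ∈ piAntidiag univ (t - 1) ↔ c ∈ piAntidiag univ (t - 1) := by
    simp only [mem_piAntidiag, hsum, mem_univ, implies_true, and_true]
  have hunique : ∀ c ∈ piAntidiag univ (t - 1), ∃! j, IsAliveBefore t fun n => rotate j c n :=
    fun c hc => existsUnique_isAliveBefore_rotate c (by simpa using hc)
  simpa [lukasiewiczWords] using sum_eq_card_nsmul_sum_filter_of_existsUnique _ rotate hmem
    (fun c => ∏ i, f (c i)) hprod (fun c => IsAliveBefore t fun n => c n) hunique

end Rotation

theorem sum_piAntidiag_prod_pow_div_factorial {ι K : Type*} [DecidableEq ι] [Field K]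
    [CharZero K] (s : Finset ι) (x : ι → K) (n : ℕ) :
    ∑ k ∈ piAntidiag s n, ∏ i ∈ s, x i ^ k i / (k i).factorial =
      (∑ i ∈ s, x i) ^ n / n.factorial := by
  rw [sum_pow_eq_sum_piAntidiag, sum_div]
  refine sum_congr rfl fun k hk => ?_
  have hmul : ((∏ i ∈ s, (k i).factorial : ℕ) : K) * Nat.multinomial s k = n.factorial := by
    rw [← Nat.cast_mul, Nat.multinomial_spec, (mem_piAntidiag.mp hk).1]
  have hne : (Nat.multinomial s k : K) ≠ 0 := by exact_mod_cast (Nat.multinomial_pos s k).ne'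
  rw [prod_div_distrib, ← hmul, Nat.cast_prod, mul_comm (Nat.multinomial s k : K),
    mul_div_mul_right _ _ hne]

theorem sum_piAntidiag_prod_poisson {ι : Type*} [DecidableEq ι] (s : Finset ι) (x : ι → ℝ)
    (n : ℕ) :
    ∑ k ∈ piAntidiag s n, ∏ i ∈ s, Real.exp (-x i) * x i ^ k i / (k i).factorial =
      Real.exp (-∑ i ∈ s, x i) * (∑ i ∈ s, x i) ^ n / n.factorial := by
  simp_rw [mul_div_assoc, prod_mul_distrib, ← mul_sum, sum_piAntidiag_prod_pow_div_factorial,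
    ← Real.exp_sum, sum_neg_distrib]

theorem sum_lukasiewiczWords_prod_poisson {γ : ℝ} (hγ : γ ≠ 0) (t : ℕ) [NeZero t] :
    ∑ c ∈ lukasiewiczWords t, ∏ i, Real.exp (-γ) * γ ^ c i / (c i).factorial =
      (t : ℝ) ^ (t - 1) * (γ * Real.exp (-γ)) ^ t / (γ * t.factorial) := by
  have hcount := sum_piAntidiag_eq_nsmul_sum_lukasiewiczWords (t := t)
    fun k => Real.exp (-γ) * γ ^ k / k.factorial
  have hsum : ∑ _i : Fin t, γ = t * γ := by simp
  have hexp : Real.exp (-(t * γ)) = Real.exp (-γ) ^ t := by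
    rw [← Real.exp_nat_mul, mul_neg]
  have hfac : (t.factorial : ℝ) = t * (t - 1).factorial := by
    exact_mod_cast (Nat.mul_factorial_pred (NeZero.ne t)).symm
  have hpow : γ ^ t = γ * γ ^ (t - 1) := by
    rw [← pow_succ', Nat.sub_add_cancel NeZero.one_le]
  have ht : (t : ℝ) ≠ 0 := Nat.cast_ne_zero.mpr (NeZero.ne t)
  rw [sum_piAntidiag_prod_poisson, nsmul_eq_mul, hsum, hexp] at hcount
  rw [hfac, mul_pow, hpow]
  field_simp at hcount ⊢
  linear_combination -hcount

theorem measure_tuple_mem_eq_sum_prod {Ω ι β : Type*} [MeasurableSpace Ω] {μ : Measure Ω}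
    [Fintype ι] [MeasurableSpace β] [MeasurableSingletonClass β] {Y : ι → Ω → β}
    (hY : ∀ i, Measurable (Y i)) (hindep : ProbabilityTheory.iIndepFun Y μ)
    (G : Finset (ι → β)) :
    μ {ω | (fun i => Y i ω) ∈ G} = ∑ c ∈ G, ∏ i, μ {ω | Y i ω = c i} := by
  have hfiber (c : ι → β) :
      (fun ω i => Y i ω) ⁻¹' {c} = ⋂ i ∈ (univ : Finset ι), Y i ⁻¹' {c i} := by
    ext ω
    simp [funext_iff]
  have hmeas (c : ι → β) : MeasurableSet ((fun ω i => Y i ω) ⁻¹' {c}) :=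
    hfiber c ▸ Finset.measurableSet_biInter _ fun i _ => hY i (measurableSet_singleton _)
  rw [show {ω | (fun i => Y i ω) ∈ G} = (fun ω i => Y i ω) ⁻¹' ↑G from rfl,
    ← sum_measure_preimage_singleton G fun c _ => hmeas c]
  refine sum_congr rfl fun c _ => ?_
  rw [hfiber, hindep.measure_inter_preimage_eq_mul _ fun i _ => measurableSet_singleton (c i)]
  rfl

theorem borel_distribution_general {Ω : Type*} [MeasurableSpace Ω] (μ : Measure Ω)
    (γ : ℝ) (hγ0 : 0 < γ)
    (X : ℕ → Ω → ℕ) (hmeas : ∀ i, Measurable (X i))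
    (hindep : ProbabilityTheory.iIndepFun X μ)
    (hdist : ∀ i k, μ {ω | X i ω = k} =
      ENNReal.ofReal (Real.exp (-γ) * γ ^ k / k.factorial))
    (T : Ω → ℕ)
    (hT : ∀ ω, T ω = sInf {t | 1 ≤ t ∧ ∑ i ∈ Finset.range t, X i ω = t - 1})
    (t : ℕ) (ht : 1 ≤ t) :
    μ {ω | T ω = t} =
      ENNReal.ofReal ((t : ℝ) ^ (t - 1) * (γ * Real.exp (-γ)) ^ t / (γ * t.factorial)) := by
  have : NeZero t := ⟨by omega⟩
  have hevent : {ω | T ω = t} = {ω | (fun i : Fin t => X i ω) ∈ lukasiewiczWords t} := by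
    ext ω
    simp only [Set.mem_ofPred_eq, hT, sInf_setOf_sum_range_eq_sub_one_eq_iff _ ht,
      lukasiewiczWords, mem_filter, mem_piAntidiag, mem_univ, implies_true, and_true,
      Fin.sum_univ_eq_sum_range (X · ω)]
    exact and_congr_right' (isAliveBefore_congr fun n hn => by rw [Fin.val_cast_of_lt hn])
  have hp (k : ℕ) : 0 ≤ Real.exp (-γ) * γ ^ k / k.factorial := by positivity
  rw [hevent, measure_tuple_mem_eq_sum_prod (Y := fun i : Fin t => X i) (fun i => hmeas i)
    (hindep.precomp Fin.val_injective), ← sum_lukasiewiczWords_prod_poisson hγ0.ne' t,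
    ENNReal.ofReal_sum_of_nonneg fun c _ => prod_nonneg fun i _ => hp (c i)]
  refine sum_congr rfl fun c _ => ?_
  rw [ENNReal.ofReal_prod_of_nonneg fun i _ => hp (c i)]
  exact prod_congr rfl fun i _ => hdist i (c i)

/-- Borel distribution of the total progeny of a Poisson(γ) Galton–Watson process:
if `X i` are the i.i.d. Poisson(γ) offspring numbers (explored in BFS order) and
`T = inf {t ≥ 1 : X₁ + ⋯ + X_t = t - 1}` is the total progeny, then
`P(T = t) = t^{t-1} (γ e^{-γ})^t / (γ t!)` for every `t ≥ 1`. -/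
theorem borel_distribution {Ω : Type*} [MeasurableSpace Ω] (μ : Measure Ω)
    [IsProbabilityMeasure μ] (γ : ℝ) (hγ0 : 0 < γ) (hγ1 : γ ≤ 1)
    (X : ℕ → Ω → ℕ) (hmeas : ∀ i, Measurable (X i))
    (hindep : ProbabilityTheory.iIndepFun X μ)
    (hdist : ∀ i k, μ {ω | X i ω = k} =
      ENNReal.ofReal (Real.exp (-γ) * γ ^ k / k.factorial))
    (T : Ω → ℕ)
    (hT : ∀ ω, T ω = sInf {t | 1 ≤ t ∧ ∑ i ∈ Finset.range t, X i ω = t - 1})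
    (t : ℕ) (ht : 1 ≤ t) :
    μ {ω | T ω = t} =
      ENNReal.ofReal ((t : ℝ) ^ (t - 1) * (γ * Real.exp (-γ)) ^ t / (γ * t.factorial)) :=
  borel_distribution_general μ γ hγ0 X hmeas hindep hdist T hT t ht
end

section
/- (Otter's hitting time theorem) Let (W_t) be a random walk with W_0 = k, whose increments Y_i are i.i.d. integer-valued random variables satisfying Y_i ≥ -1 almost surely. Let τ_0 be the first hitting time of 0. Then for all t ≥ 1, P_k(τ_0 = t) = (k/t) · P_k(W_t = 0). -/
open MeasureTheory Finset

/-!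
Fix `t` and look at the increment vector `v = (Y 0, …, Y (t-1))` together with its `t` cyclic
rotations. By the cycle lemma, if `k + ∑ v = 0` then exactly `k` rotations first reach `0` at
time `t`: extend `v` periodically, so that the partial sums `S` drop by `k` per period; the rotation
starting at `r` is good iff `r + t` is a strict descending ladder epoch of `S`, and as `S` moves
down by at most one per step, the ladder epochs in a period are counted by the drop `k` of the
running minimum. Independent identically distributed increments are exchangeable, so every
rotation of `v` has the law of `v`, and summing over rotations gives
`t • P(τ₀ = t) = E[#good rotations] = k • P(W t = 0)`.
-/

namespace HittingTime

section Ladder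

variable {S : ℕ → ℤ}

def runningMin (S : ℕ → ℤ) (n : ℕ) : ℤ := (range (n + 1)).inf' nonempty_range_add_one S

def IsStrictLadder (S : ℕ → ℤ) (n : ℕ) : Prop := ∀ m < n, S n < S m

instance (S : ℕ → ℤ) : DecidablePred (IsStrictLadder S) := fun n => by
  unfold IsStrictLadder; infer_instance

lemma runningMin_le {m n : ℕ} (h : m ≤ n) : runningMin S n ≤ S m :=
  inf'_le _ (mem_range_succ_iff.2 h)

lemma le_runningMin_iff {a : ℤ} {n : ℕ} : a ≤ runningMin S n ↔ ∀ m ≤ n, a ≤ S m := by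
  simp [runningMin]

lemma exists_eq_runningMin (S : ℕ → ℤ) (n : ℕ) : ∃ m ≤ n, S m = runningMin S n := by
  obtain ⟨m, hm, h⟩ := exists_mem_eq_inf' nonempty_range_add_one S
  exact ⟨m, mem_range_succ_iff.1 hm, h.symm⟩

lemma runningMin_zero : runningMin S 0 = S 0 := by simp [runningMin]

lemma runningMin_succ (n : ℕ) : runningMin S (n + 1) = min (S (n + 1)) (runningMin S n) := by
  simp only [runningMin, range_add_one (n := n + 1)]
  exact inf'_insert _ _

lemma isStrictLadder_succ_iff (n : ℕ) :
    IsStrictLadder S (n + 1) ↔ S (n + 1) < runningMin S n := by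
  simp [IsStrictLadder, runningMin]

/-- A walk that moves down by at most one per step reaches each new strict minimum exactly one
below the previous one. -/
theorem card_isStrictLadder (hS : ∀ n, S n - 1 ≤ S (n + 1)) (n : ℕ) :
    (#{m ∈ range (n + 1) | IsStrictLadder S m} : ℤ) = S 0 + 1 - runningMin S n := by
  induction n with
  | zero =>
    have h0 : IsStrictLadder S 0 := fun m hm => absurd hm m.not_lt_zero
    simp [runningMin_zero, filter_singleton, h0]
  | succ n ih =>
    have hmin : runningMin S n ≤ S n := runningMin_le le_rfl
    rw [range_add_one, filter_insert, runningMin_succ]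
    by_cases hL : IsStrictLadder S (n + 1)
    · have hlt := (isStrictLadder_succ_iff n).1 hL
      rw [if_pos hL, card_insert_of_notMem (by simp)]
      have := hS n
      push_cast
      omega
    · have hge := not_lt.1 (mt (isStrictLadder_succ_iff n).2 hL)
      rw [if_neg hL, min_eq_right hge, ih]

lemma runningMin_add_period {t k : ℕ} (hper : ∀ n, S (n + t) = S n - k) {n : ℕ}
    (hn : t ≤ n + 1) : runningMin S (n + t) = runningMin S n - k := by
  apply le_antisymm
  · obtain ⟨m, hm, hSm⟩ := exists_eq_runningMin S n
    have := runningMin_le (S := S) (show m + t ≤ n + t by omega)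
    rwa [hper, hSm] at this
  · refine le_runningMin_iff.2 fun m hm => ?_
    by_cases hmn : m ≤ n
    · have := runningMin_le (S := S) hmn
      omega
    · have h := hper (m - t)
      rw [Nat.sub_add_cancel (by omega)] at h
      have := runningMin_le (S := S) (show m - t ≤ n by omega)
      omega

lemma isStrictLadder_of_lt_last_period {t k : ℕ} (hper : ∀ n, S (n + t) = S n - k) (ht : 0 < t)
    {r : ℕ} (h : ∀ j < t, S (r + t) < S (r + j)) : IsStrictLadder S (r + t) := by
  suffices ∀ q m, r ≤ m + q * t → m < r + t → S (r + t) < S m from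
    fun m hm => this r m (by nlinarith) hm
  intro q
  induction q with
  | zero =>
    intro m hrm hm
    simpa [Nat.add_sub_cancel' (show r ≤ m by omega)] using h (m - r) (by omega)
  | succ q ih =>
    intro m hrm hm
    by_cases hr : r ≤ m
    · exact ih m (by omega) hm
    · have := ih (m + t) (by rw [add_mul] at hrm; omega) (by omega)
      rw [hper m] at this
      omega

lemma card_isStrictLadder_add_period {t k : ℕ} (hS : ∀ n, S n - 1 ≤ S (n + 1))
    (hper : ∀ n, S (n + t) = S n - k) (ht : 0 < t) :
    #{r ∈ range t | IsStrictLadder S (t + r)} = k := by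
  obtain ⟨s, rfl⟩ : ∃ s, t = s + 1 := ⟨t - 1, by omega⟩
  have hfirst := card_isStrictLadder hS s
  have hboth := card_isStrictLadder hS (s + (s + 1))
  rw [runningMin_add_period hper le_rfl, show s + (s + 1) + 1 = (s + 1) + (s + 1) by ring,
    card_filter, sum_range_add, ← card_filter, ← card_filter] at hboth
  push_cast at hboth
  omega

end Ladder

section Cycle

def walk (k : ℤ) (x : ℕ → ℤ) (n : ℕ) : ℤ := k + ∑ i ∈ range n, x i

def FirstZeroAt (w : ℕ → ℤ) (t : ℕ) : Prop := w t = 0 ∧ ∀ n < t, w n ≠ 0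

instance (w : ℕ → ℤ) : DecidablePred (FirstZeroAt w) := fun t => by
  unfold FirstZeroAt; infer_instance

lemma firstZeroAt_congr {w w' : ℕ → ℤ} {t : ℕ} (h : ∀ n ≤ t, w n = w' n) :
    FirstZeroAt w t ↔ FirstZeroAt w' t := by
  unfold FirstZeroAt
  rw [h t le_rfl]
  exact and_congr_right' <| forall₂_congr fun n hn => by rw [h n hn.le]

lemma _root_.Nat.sInf_setOf_eq_iff {p : ℕ → Prop} {t : ℕ} (ht : t ≠ 0) :
    sInf {n | p n} = t ↔ p t ∧ ∀ n < t, ¬ p n := by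
  classical
  by_cases hp : ∃ n, p n
  · rw [Nat.sInf_def (s := {n | p n}) hp]
    exact Nat.find_eq_iff hp
  · rw [not_exists] at hp
    rw [Set.eq_empty_of_forall_notMem (s := {n | p n}) hp, Nat.sInf_empty]
    exact iff_of_false (Ne.symm ht) fun h => hp t h.1

variable {x : ℕ → ℤ} {t k : ℕ}

lemma walk_pos_of_ne_zero {k : ℤ} (hx : ∀ i, -1 ≤ x i) (hk : 0 < k)
    (h : ∀ n < t, walk k x n ≠ 0) : ∀ n < t, 0 < walk k x n := by
  intro n hn
  induction n with
  | zero => simpa [walk] using hk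
  | succ n ih =>
    have hstep : walk k x (n + 1) = walk k x n + x n := by
      simp [walk, sum_range_succ, add_assoc]
    have := ih (by omega)
    have := h (n + 1) hn
    have := hx n
    omega

lemma sum_range_add_period (hx : Function.Periodic x t) (n : ℕ) :
    ∑ i ∈ range (n + t), x i = ∑ i ∈ range n, x i + ∑ i ∈ range t, x i := by
  rw [add_comm n, sum_range_add, add_comm]
  congr 1
  exact sum_congr rfl fun i _ => by rw [add_comm, hx]

lemma walk_rotate_period (hper : Function.Periodic x t) (k : ℤ) (r : ℕ) :
    walk k (fun i => x (r + i)) t = walk k x t := by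
  have := sum_range_add_period hper r
  rw [sum_range_add] at this
  simp only [walk]
  omega

lemma firstZeroAt_rotate_iff (hper : Function.Periodic x t) (hx : ∀ i, -1 ≤ x i) (ht : 0 < t)
    (hsum : walk k x t = 0) (r : ℕ) :
    FirstZeroAt (walk k fun i => x (r + i)) t ↔
      IsStrictLadder (fun n => ∑ i ∈ range n, x i) (r + t) := by
  set S : ℕ → ℤ := fun n => ∑ i ∈ range n, x i
  have hper' : ∀ n, S (n + t) = S n - k := fun n => by
    simp only [S, sum_range_add_period hper]; simp only [walk] at hsum; omega
  have hrot : ∀ j, walk k (fun i => x (r + i)) j = S (r + j) - S (r + t) := fun j => by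
    simp only [walk, S, hper', sum_range_add]; ring
  simp only [FirstZeroAt, hrot, sub_self, true_and]
  constructor
  · intro h
    have hk : (0 : ℤ) < k := by
      have := h 0 ht; simp only [add_zero, hper'] at this; omega
    refine isStrictLadder_of_lt_last_period hper' ht fun j hj => ?_
    have := walk_pos_of_ne_zero (fun i => hx (r + i)) hk (t := t)
      (fun n hn => by rw [hrot]; exact h n hn) j hj
    rw [hrot] at this
    omega
  · intro h j hj
    have := h (r + j) (by omega)
    omega

/-- The cycle lemma of Dvoretzky and Motzkin. -/
theorem card_firstZeroAt_rotate (hper : Function.Periodic x t) (hx : ∀ i, -1 ≤ x i)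
    (ht : 0 < t) (hsum : walk k x t = 0) :
    #{r ∈ range t | FirstZeroAt (walk k fun i => x (r + i)) t} = k := by
  have hS : ∀ n, (∑ i ∈ range n, x i) - 1 ≤ ∑ i ∈ range (n + 1), x i := fun n => by
    rw [sum_range_succ]; linarith [hx n]
  have hper' : ∀ n, ∑ i ∈ range (n + t), x i = ∑ i ∈ range n, x i - k := fun n => by
    rw [sum_range_add_period hper]; simp only [walk] at hsum; omega
  refine (congrArg card <| filter_congr fun r _ => ?_).trans
    (card_isStrictLadder_add_period hS hper' ht)
  rw [firstZeroAt_rotate_iff hper hx ht hsum, add_comm]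

end Cycle

section Rotation

open Fin.NatCast

variable {t : ℕ} [NeZero t]

theorem card_rotate_firstZeroAt {v : Fin t → ℤ} (hv : ∀ i, -1 ≤ v i) (k : ℕ) :
    #{c : Fin t | FirstZeroAt (walk k fun n => (v ∘ Equiv.addLeft c) n) t} =
      if walk k (fun n => v n) t = 0 then k else 0 := by
  have hper : Function.Periodic (fun n : ℕ => v n) t := fun n => by simp
  have hcard : #{c : Fin t | FirstZeroAt (walk k fun n => (v ∘ Equiv.addLeft c) n) t} =
      #{r ∈ range t | FirstZeroAt (walk k fun n => v ((r + n : ℕ) : Fin t)) t} := by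
    simp only [card_filter]
    rw [← Fin.sum_univ_eq_sum_range
      (fun r => if FirstZeroAt (walk k fun n => v ((r + n : ℕ) : Fin t)) t then 1 else 0)]
    simp only [Function.comp_apply, Equiv.coe_addLeft, Nat.cast_add, Fin.cast_val_eq_self]
    rfl
  rw [hcard]
  split_ifs with hsum
  · exact card_firstZeroAt_rotate hper (fun i => hv _) (NeZero.pos t) hsum
  · refine card_eq_zero.2 <| filter_eq_empty_iff.2 fun r _ h => hsum ?_
    rw [← walk_rotate_period hper k r]
    exact h.1

lemma walk_restrict_fin (k : ℤ) (x : ℕ → ℤ) {n : ℕ} (hn : n ≤ t) :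
    walk k (fun m : ℕ => x ((m : Fin t) : ℕ)) n = walk k x n :=
  congrArg _ <| sum_congr rfl fun i hi => by
    simp only [Fin.val_natCast, Nat.mod_eq_of_lt (show i < t by simp at hi; omega)]

end Rotation

section Measure

variable {Ω : Type*} [MeasurableSpace Ω] {μ : Measure Ω}

open Classical in
lemma sum_measure_eq_mul_measure_of_card {ι : Type*} [Fintype ι] {E : ι → Set Ω} {A : Set Ω}
    (hE : ∀ c, MeasurableSet (E c)) (hA : MeasurableSet A) {k : ℕ}
    (hcard : ∀ ω, #{c | ω ∈ E c} = if ω ∈ A then k else 0) :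
    ∑ c, μ (E c) = k * μ A := by
  have hpt : ∀ ω, ∑ c, (E c).indicator 1 ω = A.indicator (fun _ => (k : ENNReal)) ω := by
    intro ω
    simp only [Set.indicator_apply, Pi.one_apply, sum_boole, hcard ω]
    split_ifs <;> simp
  calc ∑ c, μ (E c) = ∑ c, ∫⁻ ω, (E c).indicator 1 ω ∂μ := by
        simp only [lintegral_indicator_one (hE _)]
    _ = ∫⁻ ω, ∑ c, (E c).indicator 1 ω ∂μ :=
        (lintegral_finsetSum _ fun c _ => measurable_one.indicator (hE c)).symm
    _ = k * μ A := by rw [lintegral_congr hpt, lintegral_indicator_const hA]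

lemma measurePreserving_comp_equiv {ι β : Type*} [Fintype ι] [MeasurableSpace β] (ν : Measure β)
    [SigmaFinite ν] (e : ι ≃ ι) :
    MeasurePreserving (fun v : ι → β => v ∘ e) (Measure.pi fun _ => ν) (Measure.pi fun _ => ν) := by
  convert measurePreserving_piCongrLeft (fun _ => ν) e.symm using 1
  funext v i
  simp [MeasurableEquiv.coe_piCongrLeft, Equiv.piCongrLeft_apply]

lemma measurePreserving_restrict_fin [IsFiniteMeasure μ] {Y : ℕ → Ω → ℤ}
    (hmeas : ∀ i, Measurable (Y i)) (hindep : ProbabilityTheory.iIndepFun Y μ)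
    (hident : ∀ i, μ.map (Y i) = μ.map (Y 0)) (t : ℕ) :
    MeasurePreserving (fun ω (i : Fin t) => Y i ω) μ (Measure.pi fun _ => μ.map (Y 0)) := by
  refine ⟨measurable_pi_lambda _ fun i => hmeas i, ?_⟩
  simpa [hident] using ProbabilityTheory.iIndepFun.map_fun_eq_pi_map (f := fun i : Fin t => Y i)
    (fun i => (hmeas i).aemeasurable) (hindep.precomp Fin.val_injective)

end Measure

end HittingTime

open HittingTime Fin.NatCast

/-- Otter's hitting time theorem: let `W t = k + Y₁ + ⋯ + Y_t` be a random walk started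
at `k` whose i.i.d. integer increments satisfy `Y i ≥ -1` a.s. (here surely), and let
`τ₀ = inf {t : W t = 0}`. Then for all `t ≥ 1`,
`P_k(τ₀ = t) = (k/t) P_k(W t = 0)`. -/
theorem otter_hitting_time {Ω : Type*} [MeasurableSpace Ω] (μ : Measure Ω)
    [IsProbabilityMeasure μ] (Y : ℕ → Ω → ℤ) (hmeas : ∀ i, Measurable (Y i))
    (hindep : ProbabilityTheory.iIndepFun Y μ)
    (hident : ∀ i, Measure.map (Y i) μ = Measure.map (Y 0) μ)
    (hge : ∀ i ω, -1 ≤ Y i ω)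
    (k : ℕ) (τ : Ω → ℕ)
    (hτ : ∀ ω, τ ω = sInf {t | (k : ℤ) + ∑ i ∈ Finset.range t, Y i ω = 0})
    (t : ℕ) (ht : 1 ≤ t) :
    μ {ω | τ ω = t} =
      ((k : ENNReal) / (t : ENNReal)) *
        μ {ω | (k : ℤ) + ∑ i ∈ Finset.range t, Y i ω = 0} := by
  have : NeZero t := ⟨by omega⟩
  set V : Ω → Fin t → ℤ := fun ω i => Y i ω
  have hlaw := measurePreserving_restrict_fin hmeas hindep hident t
  have hwalk (ω : Ω) (n : ℕ) (hn : n ≤ t) : walk k (fun m => V ω m) n = walk k (Y · ω) n :=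
    walk_restrict_fin k (Y · ω) hn
  set B : Set (Fin t → ℤ) := {v | FirstZeroAt (walk k fun n => v n) t}
  set A : Set (Fin t → ℤ) := {v | walk k (fun n => v n) t = 0}
  have hB : {ω | τ ω = t} = V ⁻¹' B := Set.ext fun ω => by
    rw [Set.mem_ofPred_eq, hτ, Nat.sInf_setOf_eq_iff (by omega)]
    exact (firstZeroAt_congr (hwalk ω)).symm
  have hA : {ω | (k : ℤ) + ∑ i ∈ Finset.range t, Y i ω = 0} = V ⁻¹' A :=
    Set.ext fun ω => (congrArg (· = 0) (hwalk ω t le_rfl)).to_iff.symm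
  have hrot (c : Fin t) : μ ((fun ω => V ω ∘ Equiv.addLeft c) ⁻¹' B) = μ (V ⁻¹' B) :=
    (((measurePreserving_comp_equiv _ _).comp hlaw).measure_preimage
      MeasurableSet.of_discrete.nullMeasurableSet).trans
      (hlaw.measure_preimage MeasurableSet.of_discrete.nullMeasurableSet).symm
  have hcount := sum_measure_eq_mul_measure_of_card (μ := μ)
    (E := fun c : Fin t => (fun ω => V ω ∘ Equiv.addLeft c) ⁻¹' B) (A := V ⁻¹' A)
    (fun c => (measurable_pi_lambda _ fun i => hmeas _) MeasurableSet.of_discrete)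
    (hlaw.measurable MeasurableSet.of_discrete)
    -- `convert` only reconciles the classical and the derived decidability instances
    fun ω => by convert card_rotate_firstZeroAt (v := V ω) (fun i => hge _ ω) k <;> rfl
  simp only [hrot, sum_const, card_univ, Fintype.card_fin, nsmul_eq_mul] at hcount
  rw [hB, hA, ENNReal.div_eq_inv_mul, mul_assoc, ← hcount, ← mul_assoc,
    ENNReal.inv_mul_cancel (by exact_mod_cast NeZero.ne t) (ENNReal.natCast_ne_top t), one_mul]
end

section
/- Fix M > 0. Suppose ε = ε(n) → 0 with ε³n → ∞, λ = 1+ε, μ the conjugate of λ, and let S_m ~ Poisson(mμ). Let n_1 = (1-μ)(1-μ/λ)n + c_1√(εn), n_2 = μ(1-μ/λ)n + c_2√(n/ε) with |c_1|, |c_2| ≤ M. Then there is a constant δ' = δ'(M) > 0 such that for all large n, P(S_{n_1+n_2} = n_2) ≥ δ'/√(nε). -/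
open Filter

/-- Taylor lower bound for `log (1+u)` on `[0, 1/2]`. -/
lemma log_one_add_taylor_lb {u : ℝ} (h0 : 0 ≤ u) (h1 : u ≤ 1/2) :
    u - u ^ 2 / 2 - 2 * u ^ 3 ≤ Real.log (1 + u) := by
  have habs : |(-u)| = u := by rw [abs_neg, abs_of_nonneg h0]
  have h : |(-u)| < 1 := by rw [habs]; linarith
  have key := Real.abs_log_sub_add_sum_range_le h 2
  rw [Finset.sum_range_succ, Finset.sum_range_one, habs] at key
  have h1u : 1 - -u = 1 + u := by ring
  rw [h1u] at key
  have key2 := (abs_le.1 key).1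
  norm_num at key2
  have hden : u ^ 3 / (1 - u) ≤ 2 * u ^ 3 := by
    rw [div_le_iff₀ (by linarith)]
    nlinarith [mul_nonneg (pow_nonneg h0 3) (by linarith : (0:ℝ) ≤ 1 - 2 * u)]
  linarith

/-- If `μ` is the conjugate of `1+e` with `e` small, then `1 - μ ≤ 2e`. -/
lemma conjugate_close {e m : ℝ} (he : 0 < e) (he1 : e ≤ 1/100) (hm0 : 0 < m) (hm1 : m < 1)
    (heq : m * Real.exp (-m) = (1 + e) * Real.exp (-(1 + e))) : 1 - m ≤ 2 * e := by
  by_contra hc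
  push_neg at hc
  have hm2 : m < 1 - 2 * e := by linarith
  have h1e : (0:ℝ) < 1 + e := by linarith
  have h2e : (0:ℝ) < 1 - 2 * e := by linarith
  have hlog : Real.log m - m = Real.log (1 + e) - (1 + e) := by
    have h1 : Real.log (m * Real.exp (-m)) = Real.log m + -m := by
      rw [Real.log_mul (ne_of_gt hm0) (Real.exp_ne_zero _), Real.log_exp]
    rw [heq, Real.log_mul (ne_of_gt h1e) (Real.exp_ne_zero _), Real.log_exp] at h1
    linarith
  -- monotonicity of `log x - x` on `(0,1]`
  have hmono : Real.log m - m ≤ Real.log (1 - 2 * e) - (1 - 2 * e) := by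
    have h3 : Real.log (m / (1 - 2 * e)) ≤ m / (1 - 2 * e) - 1 :=
      Real.log_le_sub_one_of_pos (by positivity)
    rw [Real.log_div (ne_of_gt hm0) (ne_of_gt h2e)] at h3
    have h5 : m / (1 - 2 * e) - 1 ≤ m - (1 - 2 * e) := by
      rw [div_sub' (ne_of_gt h2e), div_le_iff₀ h2e]
      nlinarith
    linarith
  have hkey : Real.log (1 + e) - Real.log (1 - 2 * e) ≤ 3 * e := by linarith
  obtain ⟨u, hud⟩ : ∃ u : ℝ, u * (1 - 2 * e) = 3 * e :=
    ⟨3 * e / (1 - 2 * e), by rw [div_mul_cancel₀ _ (ne_of_gt h2e)]⟩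
  have hu0 : 0 < u := by nlinarith
  have hub : u ≤ 3.1 * e := by nlinarith
  have hu3 : 3 * e ≤ u := by nlinarith
  have hu2 : u ≤ 1 / 2 := by nlinarith
  have hq : u - 3 * e = 2 * e * u := by linear_combination hud
  have hlogeq : Real.log (1 + u) = Real.log (1 + e) - Real.log (1 - 2 * e) := by
    have h6 : (1:ℝ) + u = (1 + e) / (1 - 2 * e) := by
      rw [eq_div_iff (ne_of_gt h2e)]; linear_combination hud
    rw [h6, Real.log_div (ne_of_gt h1e) (ne_of_gt h2e)]
  have hgt : 3 * e < Real.log (1 + u) := by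
    have htay := log_one_add_taylor_lb hu0.le hu2
    have h7 : u ^ 2 / 2 + 2 * u ^ 3 < 2 * e * u := by
      nlinarith [mul_pos he hu0, mul_le_mul_of_nonneg_left hub hu0.le, sq_nonneg u]
    linarith
  linarith [hlogeq ▸ hgt]

/-- Stirling-type upper bound for factorial. -/
lemma factorial_upper (k : ℕ) (hk : 1 ≤ k) :
    (k.factorial : ℝ) ≤ Real.exp 1 * Real.sqrt k * (k / Real.exp 1) ^ k := by
  have h1 : Stirling.stirlingSeq k ≤ Stirling.stirlingSeq 1 := by
    have := Stirling.stirlingSeq'_antitone (Nat.zero_le (k - 1))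
    simpa [Function.comp, Nat.succ_eq_add_one, Nat.sub_add_cancel hk] using this
  rw [Stirling.stirlingSeq_one] at h1
  have hk0 : (0:ℝ) < k := by exact_mod_cast hk
  have hden : (0:ℝ) < Real.sqrt (2 * k) * ((k:ℝ) / Real.exp 1) ^ k := by positivity
  have h2 : (k.factorial : ℝ) ≤ Real.exp 1 / Real.sqrt 2 * (Real.sqrt (2 * k) * ((k:ℝ) / Real.exp 1) ^ k) := by
    rw [← div_le_iff₀ hden]
    exact h1
  have hsq : Real.sqrt (2 * k) = Real.sqrt 2 * Real.sqrt k := Real.sqrt_mul (by norm_num) _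
  rw [hsq] at h2
  have hs2 : (0:ℝ) < Real.sqrt 2 := by positivity
  calc (k.factorial : ℝ) ≤ Real.exp 1 / Real.sqrt 2 * (Real.sqrt 2 * Real.sqrt k * ((k:ℝ) / Real.exp 1) ^ k) := h2
    _ = Real.exp 1 * Real.sqrt k * ((k:ℝ) / Real.exp 1) ^ k := by field_simp

/-- From `c^2 ≤ s^2` with both nonneg, conclude `c ≤ s`. -/
lemma le_of_sq_le_sq' {c s : ℝ} (hs : 0 ≤ s) (hc : 0 ≤ c) (h : c ^ 2 ≤ s ^ 2) : c ≤ s := by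
  nlinarith only [hs, hc, h]

set_option maxHeartbeats 1000000 in
/-- Local-limit-type lower bound: with `λ = 1 + ε(n)`, `μ(n) ∈ (0,1)` the conjugate of
`λ`, and integers `n₁ = (1-μ)(1-μ/λ)n + O(M√(εn))`, `n₂ = μ(1-μ/λ)n + O(M√(n/ε))`,
the Poisson pmf satisfies `P(S_{n₁+n₂} = n₂) ≥ δ'/√(nε)` for all large `n`, where
`S_m ~ Po(m μ)` and `δ' = δ'(M) > 0`. -/
theorem poisson_local_lower_bound (ε : ℕ → ℝ) (μf : ℕ → ℝ)
    (hεpos : ∀ n, 0 < ε n)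
    (hε0 : Tendsto ε atTop (nhds 0))
    (hε3 : Tendsto (fun n => ε n ^ 3 * n) atTop atTop)
    (hμ : ∀ n, 0 < μf n ∧ μf n < 1 ∧
      μf n * Real.exp (-μf n) = (1 + ε n) * Real.exp (-(1 + ε n)))
    (M : ℝ) (hM : 0 < M) :
    ∃ δ' > 0, ∃ N : ℕ, ∀ n ≥ N, ∀ n1 n2 : ℕ,
      |(n1 : ℝ) - (1 - μf n) * (1 - μf n / (1 + ε n)) * n| ≤ M * Real.sqrt (ε n * n) →
      |(n2 : ℝ) - μf n * (1 - μf n / (1 + ε n)) * n| ≤ M * Real.sqrt (n / ε n) →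
      δ' / Real.sqrt (n * ε n) ≤
        Real.exp (-(((n1 + n2 : ℕ) : ℝ) * μf n)) * (((n1 + n2 : ℕ) : ℝ) * μf n) ^ n2 /
          n2.factorial := by
  refine ⟨Real.exp (-(90 * M ^ 2) - 1) / 2, by positivity, ?_⟩
  have hev : ∀ᶠ n in atTop, ε n ≤ 1/100 ∧ 3600 * (M + 1) ^ 2 ≤ ε n ^ 3 * n := by
    filter_upwards [hε0.eventually (eventually_le_nhds (by norm_num : (0:ℝ) < 1/100)),
      hε3.eventually_ge_atTop (3600 * (M + 1) ^ 2)] with n hA hB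
    exact ⟨hA, hB⟩
  obtain ⟨N, hN⟩ := eventually_atTop.1 hev
  refine ⟨N, fun n hn n1 n2 h1 h2 => ?_⟩
  obtain ⟨he1, hK⟩ := hN n hn
  obtain ⟨hm0, hm1, heq⟩ := hμ n
  set e := ε n with he_def
  set m := μf n with hm_def
  have he : 0 < e := hεpos n
  have hs : 1 - m ≤ 2 * e := conjugate_close he he1 hm0 hm1 heq
  have h1e : (0:ℝ) < 1 + e := by linarith only [he]
  have hM1 : (1:ℝ) ≤ (M + 1) ^ 2 := by nlinarith only [hM]
  have hnR : (0:ℝ) < n := by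
    rcases lt_or_ge 0 (n:ℝ) with h | h
    · exact h
    · exfalso
      have h3 : e ^ 3 * (n:ℝ) ≤ 0 := mul_nonpos_of_nonneg_of_nonpos (pow_pos he 3).le h
      linarith only [hK, h3, hM1]
  have hen : 3600 * (M + 1) ^ 2 ≤ e * n := by
    have h4 : (0:ℝ) ≤ (e * n) * (1 - e ^ 2) :=
      mul_nonneg (mul_nonneg he.le hnR.le) (by nlinarith only [he, he1])
    linarith only [hK, h4]
  -- square root facts
  set s := Real.sqrt (e * n) with hs_def
  have hs2 : s ^ 2 = e * n := Real.sq_sqrt (by positivity)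
  have hspos : 0 < s := Real.sqrt_pos.2 (by positivity)
  have hsge : 60 * (M + 1) ≤ s := by
    apply le_of_sq_le_sq' hspos.le (by linarith only [hM])
    rw [hs2]; nlinarith only [hen]
  have hsge' : 60 * M ≤ s := by linarith only [hsge, hM]
  set q := Real.sqrt ((n:ℝ) / e) with hq_def
  have hq0 : 0 ≤ q := Real.sqrt_nonneg _
  have hq : e * q = s := by
    rw [hs_def, hq_def, show e * (n:ℝ) = e ^ 2 * ((n:ℝ) / e) by field_simp,
      Real.sqrt_mul (sq_nonneg e), Real.sqrt_sq he.le]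
  have hes : 6 * M ≤ e * s := by
    apply le_of_sq_le_sq' (mul_nonneg he.le hspos.le) (by linarith only [hM])
    have h5 : (e * s) ^ 2 = e ^ 3 * n := by rw [mul_pow, hs2]; ring
    rw [h5]; nlinarith only [hK, hM]
  have hMq : M * q ≤ e * n / 6 := by
    have h' : e * (M * q) ≤ e * (e * n / 6) := by
      have h'' : e * (M * q) = M * (e * q) := by ring
      rw [h'', hq]
      have h6 : (0:ℝ) ≤ (e * s - 6 * M) * s :=
        mul_nonneg (by linarith only [hes]) hspos.le
      have h7 : e * s ^ 2 = e * (e * n) := by rw [hs2]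
      nlinarith only [h6, h7]
    exact le_of_mul_le_mul_left h' he
  -- bounds on the factor L = 1 - m/(1+e)
  have hL1 : 1 - m / (1 + e) ≤ 3 * e := by
    have h3 : (1 - 3 * e) * (1 + e) ≤ m := by nlinarith only [hs, he, he1]
    have h4 : (1 - 3 * e) ≤ m / (1 + e) := (le_div_iff₀ h1e).2 h3
    linarith only [h4]
  have hL0 : e / 2 ≤ 1 - m / (1 + e) := by
    have hm' : m / (1 + e) ≤ 1 - e / 2 := by
      rw [div_le_iff₀ h1e]
      nlinarith only [hm1, he, he1]
    linarith only [hm']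
  have hLnn : (0:ℝ) ≤ 1 - m / (1 + e) := by linarith only [hL0, he]
  -- bounds on n2
  have hB0 : (2/5) * e ≤ m * (1 - m / (1 + e)) := by
    have h7 : (1 - 2 * e) * (e / 2) ≤ m * (1 - m / (1 + e)) :=
      mul_le_mul (by linarith only [hs]) hL0 (by linarith only [he]) hm0.le
    nlinarith only [h7, he, he1]
  have hB1 : m * (1 - m / (1 + e)) ≤ 3 * e := by
    have h8 : m * (1 - m / (1 + e)) ≤ 1 * (1 - m / (1 + e)) :=
      mul_le_mul_of_nonneg_right hm1.le hLnn
    linarith only [h8, hL1]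
  have h2' := abs_le.1 h2
  have hBn0 := mul_le_mul_of_nonneg_right hB0 hnR.le
  have hBn1 := mul_le_mul_of_nonneg_right hB1 hnR.le
  have hk1 : e * n / 5 ≤ (n2:ℝ) := by linarith only [h2'.1, hBn0, hMq]
  have hk2 : (n2:ℝ) ≤ 4 * (e * n) := by linarith only [h2'.2, hBn1, hMq]
  have hn2 : 1 ≤ n2 := by
    have h6 : (1:ℝ) ≤ (n2:ℝ) := by linarith only [hk1, hen, hM1]
    exact_mod_cast h6
  have hk0 : (0:ℝ) < (n2:ℝ) := by
    have h7 : (0:ℕ) < n2 := hn2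
    exact_mod_cast h7
  -- the mean a
  set a := ((n1:ℝ) + (n2:ℝ)) * m with ha_def
  have hid : a - (n2:ℝ) = m * ((n1:ℝ) - (1 - m) * (1 - m / (1 + e)) * n)
      - (1 - m) * ((n2:ℝ) - m * (1 - m / (1 + e)) * n) := by
    rw [ha_def]; ring
  have h1' := abs_le.1 h1
  have haK : |a - (n2:ℝ)| ≤ 3 * (M * s) := by
    have e1 : |m * ((n1:ℝ) - (1 - m) * (1 - m / (1 + e)) * n)| ≤ M * s := by
      rw [abs_mul, abs_of_pos hm0]
      have h9 : (0:ℝ) ≤ (1 - m) * |(n1:ℝ) - (1 - m) * (1 - m / (1 + e)) * n| :=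
        mul_nonneg (by linarith only [hm1]) (abs_nonneg _)
      linarith only [h1, h9]
    have e2 : |(1 - m) * ((n2:ℝ) - m * (1 - m / (1 + e)) * n)| ≤ 2 * (M * s) := by
      rw [abs_mul, abs_of_nonneg (by linarith only [hm1] : (0:ℝ) ≤ 1 - m)]
      have t1 : (1 - m) * |(n2:ℝ) - m * (1 - m / (1 + e)) * n| ≤ (2 * e) * (M * q) :=
        mul_le_mul hs h2 (abs_nonneg _) (by linarith only [he])
      have t2 : (2 * e) * (M * q) = 2 * (M * s) := by rw [← hq]; ring
      linarith only [t1, t2]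
    calc |a - (n2:ℝ)| = |m * ((n1:ℝ) - (1 - m) * (1 - m / (1 + e)) * n)
          - (1 - m) * ((n2:ℝ) - m * (1 - m / (1 + e)) * n)| := by rw [hid]
      _ ≤ |m * ((n1:ℝ) - (1 - m) * (1 - m / (1 + e)) * n)|
          + |(1 - m) * ((n2:ℝ) - m * (1 - m / (1 + e)) * n)| := abs_sub _ _
      _ ≤ 3 * (M * s) := by linarith only [e1, e2]
  have haK' := abs_le.1 haK
  -- a is close to n2
  have h3Ms : 3 * (M * s) ≤ (n2:ℝ) / 2 := by
    have h10 : (0:ℝ) ≤ (s - 30 * M) * s :=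
      mul_nonneg (by linarith only [hsge', hM.le]) hspos.le
    nlinarith only [h10, hs2, hk1]
  have ha_low : (n2:ℝ) / 2 ≤ a := by linarith only [haK'.1, h3Ms]
  have ha0 : (0:ℝ) < a := by linarith only [ha_low, hk0]
  -- keystone exponent bound
  have h9 : (a - (n2:ℝ)) ^ 2 ≤ 90 * M ^ 2 * a := by
    have hsq1 : (a - (n2:ℝ)) ^ 2 ≤ 9 * (M ^ 2 * s ^ 2) := by
      have h11 := mul_self_le_mul_self (abs_nonneg (a - (n2:ℝ))) haK
      have h12 := sq_abs (a - (n2:ℝ))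
      nlinarith only [h11, h12]
    nlinarith only [hsq1, hs2, hk1, ha_low, sq_nonneg M]
  have hElb : -(90 * M ^ 2) ≤ (n2:ℝ) * (Real.log a - Real.log (n2:ℝ)) + ((n2:ℝ) - a) := by
    have hlog : 1 - (n2:ℝ) / a ≤ Real.log (a / (n2:ℝ)) := by
      have hl1 := Real.log_le_sub_one_of_pos (div_pos hk0 ha0)
      have hl2 : Real.log (a / (n2:ℝ)) = -Real.log ((n2:ℝ) / a) := by
        rw [← Real.log_inv, inv_div]
      linarith only [hl1, hl2]
    have hld : Real.log (a / (n2:ℝ)) = Real.log a - Real.log (n2:ℝ) :=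
      Real.log_div (ne_of_gt ha0) (ne_of_gt hk0)
    rw [hld] at hlog
    have h8 : (n2:ℝ) * (1 - (n2:ℝ) / a) + ((n2:ℝ) - a) = -((a - (n2:ℝ)) ^ 2 / a) := by
      field_simp
      ring
    have h10 : (a - (n2:ℝ)) ^ 2 / a ≤ 90 * M ^ 2 := by
      rw [div_le_iff₀ ha0]
      linarith only [h9]
    have h13 := mul_le_mul_of_nonneg_left hlog hk0.le
    linarith only [h13, h8, h10]
  -- assemble the final bound
  have hfac := factorial_upper n2 hn2
  have hfac0 : (0:ℝ) < n2.factorial := by exact_mod_cast n2.factorial_pos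
  have hApow : a ^ n2 = Real.exp ((n2:ℝ) * Real.log a) := by
    rw [← Real.exp_log ha0, ← Real.exp_nat_mul, Real.log_exp]
  have hKpow : ((n2:ℝ) / Real.exp 1) ^ n2 = Real.exp ((n2:ℝ) * (Real.log (n2:ℝ) - 1)) := by
    rw [show (n2:ℝ) / Real.exp 1 = Real.exp (Real.log (n2:ℝ) - 1) by
      rw [Real.exp_sub, Real.exp_log hk0], ← Real.exp_nat_mul]
  have hskpos : (0:ℝ) < Real.sqrt (n2:ℝ) := Real.sqrt_pos.2 hk0
  have key : Real.exp (-(90 * M ^ 2) - 1) / Real.sqrt (n2:ℝ) ≤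
      Real.exp (-a) * a ^ n2 / (Real.exp 1 * Real.sqrt (n2:ℝ) * ((n2:ℝ) / Real.exp 1) ^ n2) := by
    rw [hApow, hKpow, div_le_div_iff₀ hskpos (by positivity)]
    have eL : Real.exp (-(90 * M ^ 2) - 1) *
        (Real.exp 1 * Real.sqrt (n2:ℝ) * Real.exp ((n2:ℝ) * (Real.log (n2:ℝ) - 1))) =
        Real.sqrt (n2:ℝ) * Real.exp ((-(90 * M ^ 2) - 1) + 1 + (n2:ℝ) * (Real.log (n2:ℝ) - 1)) := by
      rw [Real.exp_add, Real.exp_add]; ring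
    have eR : Real.exp (-a) * Real.exp ((n2:ℝ) * Real.log a) * Real.sqrt (n2:ℝ) =
        Real.sqrt (n2:ℝ) * Real.exp (-a + (n2:ℝ) * Real.log a) := by
      rw [Real.exp_add]; ring
    rw [eL, eR]
    apply mul_le_mul_of_nonneg_left _ (Real.sqrt_nonneg (n2:ℝ))
    apply Real.exp_le_exp.2
    linarith only [hElb]
  have step1 : Real.exp (-a) * a ^ n2 / (Real.exp 1 * Real.sqrt (n2:ℝ) * ((n2:ℝ) / Real.exp 1) ^ n2)
      ≤ Real.exp (-a) * a ^ n2 / (n2.factorial : ℝ) := by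
    apply div_le_div_of_nonneg_left _ hfac0 hfac
    exact mul_nonneg (Real.exp_nonneg _) (pow_nonneg ha0.le _)
  have hsk : Real.sqrt (n2:ℝ) ≤ 2 * Real.sqrt ((n:ℝ) * e) := by
    have hc : (n2:ℝ) ≤ 2 ^ 2 * ((n:ℝ) * e) := by linarith only [hk2]
    calc Real.sqrt (n2:ℝ) ≤ Real.sqrt (2 ^ 2 * ((n:ℝ) * e)) := Real.sqrt_le_sqrt hc
      _ = 2 * Real.sqrt ((n:ℝ) * e) := by
        rw [Real.sqrt_mul (by norm_num : (0:ℝ) ≤ (2:ℝ) ^ 2),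
          Real.sqrt_sq (by norm_num : (0:ℝ) ≤ (2:ℝ))]
  have step0 : Real.exp (-(90 * M ^ 2) - 1) / 2 / Real.sqrt ((n:ℝ) * e) ≤
      Real.exp (-(90 * M ^ 2) - 1) / Real.sqrt (n2:ℝ) := by
    rw [div_div]
    exact div_le_div_of_nonneg_left (Real.exp_nonneg _) hskpos (by linarith only [hsk])
  have hcast : ((n1 + n2 : ℕ) : ℝ) * m = a := by rw [ha_def]; push_cast; ring
  rw [hcast]
  calc Real.exp (-(90 * M ^ 2) - 1) / 2 / Real.sqrt ((n:ℝ) * e) ≤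
      Real.exp (-(90 * M ^ 2) - 1) / Real.sqrt (n2:ℝ) := step0
    _ ≤ Real.exp (-a) * a ^ n2 / (Real.exp 1 * Real.sqrt (n2:ℝ) * ((n2:ℝ) / Real.exp 1) ^ n2) := key
    _ ≤ Real.exp (-a) * a ^ n2 / (n2.factorial : ℝ) := step1
end

section
/- Let v be a fixed vertex of degree 2 in a graph generated by the configuration model with N_2 degree-2 vertices and kernel edge count |E(K)|, where degree-2 half-edges and kernel half-edges are matched uniformly. The probability that v lies on a cycle consisting entirely of degree-2 vertices of length k is at most (1/(2N_2 + 2|E(K)| - 1)) · ∏_{j=0}^{k-2} (2N_2 - 2j - 1)/(2N_2 + 2|E(K)| - 2j - 3). -/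
/-- The `b`-th half-edge of the degree-2 vertex `j` among the `2N₂ + 2E` half-edges of
the configuration model (vertex `j < N₂` owns half-edges `2j` and `2j+1`). -/
def halfEdge (N2 E : ℕ) (j : Fin N2) (b : Bool) : Fin (2 * N2 + 2 * E) :=
  ⟨2 * (j : ℕ) + (if b then 0 else 1), by
    have := j.isLt; cases b <;> simp <;> omega⟩

/-- A uniform perfect matching on half-edges, encoded as a fixed-point free involution. -/
def IsMatching {n : ℕ} (σ : Equiv.Perm (Fin n)) : Prop :=
  ∀ i, σ i ≠ i ∧ σ (σ i) = i

/-- The event that the degree-2 vertex `0` lies on a cycle of length `k` consisting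
entirely of degree-2 vertices: there are distinct degree-2 vertices `w 0 = 0, w 1, …`,
cyclically indexed, whose half-edges are matched consecutively by `σ`. -/
def OnDisjointCycle (N2 E k : ℕ) (hN : 0 < N2)
    (σ : Equiv.Perm (Fin (2 * N2 + 2 * E))) : Prop :=
  ∃ (w : ZMod k → Fin N2) (b : ZMod k → Bool),
    Function.Injective w ∧ w 0 = ⟨0, hN⟩ ∧
    ∀ i : ZMod k, σ (halfEdge N2 E (w i) (b i)) =
      halfEdge N2 E (w (i + 1)) (!b (i + 1))


/-!
A perfect matching of `2n` points is determined by the partner of one point (`2n - 1` choices)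
and a perfect matching of the remaining `2n - 2` points, so there are `(2n - 1)‼` of them.

A cycle of length `k` through vertex `0` is described by its vertices `w i` (`w 0 = 0`) and the
half-edge of `w i` leading to `w (i + 1)`: at most `2 ^ k (N₂ - 1) ⋯ (N₂ - k + 1)` descriptions.
A description prescribes the matching on `2k` half-edges, so it is compatible with at most
`(2(N₂ + E - k) - 1)‼` matchings, and every matching in the event is compatible with at least two
descriptions, one for each orientation of its cycle. Dividing by `(2(N₂ + E) - 1)‼` and using
`2(N₂ - 1 - j) ≤ 2N₂ - 2j - 1` gives the bound.
-/

open Equiv Function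
open scoped Nat

namespace Equiv.Perm

variable {α : Type*}

def IsPerfectMatching (σ : Perm α) : Prop :=
  ∀ a, σ a ≠ a ∧ σ (σ a) = a

namespace IsPerfectMatching

variable {σ : Perm α}

theorem apply_ne (h : σ.IsPerfectMatching) (a : α) : σ a ≠ a := (h a).1

theorem apply_apply (h : σ.IsPerfectMatching) (a : α) : σ (σ a) = a := (h a).2

theorem apply_mem_iff (h : σ.IsPerfectMatching) {S : Set α} (hS : Set.MapsTo σ S S) (x : α) :
    σ x ∈ S ↔ x ∈ S :=
  ⟨fun hx => h.apply_apply x ▸ hS hx, fun hx => hS hx⟩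

theorem subtypePerm (h : σ.IsPerfectMatching) {p : α → Prop} (hp : ∀ x, p (σ x) ↔ p x) :
    (σ.subtypePerm hp).IsPerfectMatching :=
  fun x => ⟨fun hx => h.apply_ne x (congrArg Subtype.val hx), Subtype.ext (h.apply_apply x)⟩

theorem subtypeCongr {p : α → Prop} [DecidablePred p]
    {τ : Perm {x // p x}} {τ' : Perm {x // ¬p x}}
    (hτ : τ.IsPerfectMatching) (hτ' : τ'.IsPerfectMatching) :
    (τ.subtypeCongr τ').IsPerfectMatching := by
  intro x
  by_cases hx : p x
  · rw [subtypeCongr.left_apply _ _ hx, subtypeCongr.left_apply _ _ (τ ⟨x, hx⟩).2]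
    exact ⟨fun h => hτ.apply_ne _ (Subtype.ext h), congrArg Subtype.val (hτ.apply_apply _)⟩
  · rw [subtypeCongr.right_apply _ _ hx, subtypeCongr.right_apply _ _ (τ' ⟨x, hx⟩).2]
    exact ⟨fun h => hτ'.apply_ne _ (Subtype.ext h), congrArg Subtype.val (hτ'.apply_apply _)⟩

end IsPerfectMatching

theorem isPerfectMatching_swap [DecidableEq α] {a b : α} (hab : a ≠ b)
    (hα : ∀ x, x = a ∨ x = b) : (swap a b).IsPerfectMatching := by
  intro x
  refine ⟨?_, swap_apply_self a b x⟩
  rcases hα x with rfl | rfl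
  · simpa using hab.symm
  · simpa using hab

end Equiv.Perm

open Equiv.Perm

abbrev PerfectMatchings (α : Type*) := {σ : Perm α // σ.IsPerfectMatching}

section PerfectMatchings

variable {α : Type*}

def PerfectMatchings.restrictCompl {S : Set α} (σ : PerfectMatchings α)
    (hS : Set.MapsTo σ.1 S S) : PerfectMatchings ↥Sᶜ :=
  ⟨σ.1.subtypePerm fun x => (σ.2.apply_mem_iff hS x).not, σ.2.subtypePerm _⟩

noncomputable def perfectMatchingsApplyEqEquiv {a b : α} (hab : a ≠ b) :
    {σ : PerfectMatchings α // σ.1 a = b} ≃ PerfectMatchings ↥({a, b} : Set α)ᶜ := by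
  classical
  have hpair : (swap (⟨a, by simp⟩ : ↥({a, b} : Set α)) ⟨b, by simp⟩).IsPerfectMatching :=
    isPerfectMatching_swap (by simpa using hab) fun x => by
      rcases x.2 with hx | hx
      · exact .inl (Subtype.ext hx)
      · exact .inr (Subtype.ext hx)
  exact
  { toFun := fun σ => σ.1.restrictCompl (by
      rintro x (rfl | rfl)
      · simp [σ.2]
      · simp [← σ.2, σ.1.2.apply_apply])
    invFun := fun τ => ⟨⟨_, hpair.subtypeCongr τ.2⟩, by
      rw [subtypeCongr.left_apply _ _ (by simp)]; simp⟩
    left_inv := fun σ => by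
      ext x
      by_cases hx : x ∈ ({a, b} : Set α)
      · simp only [subtypeCongr.left_apply _ _ hx]
        rcases hx with rfl | rfl
        · simp [σ.2]
        · simp [← σ.2, σ.1.2.apply_apply]
      · simp only [subtypeCongr.right_apply _ _ hx]
        rfl
    right_inv := fun τ => by
      ext x
      exact subtypeCongr.right_apply _ _ x.2 }

theorem card_perfectMatchings [Finite α] {n : ℕ} (h : Nat.card α = 2 * n) :
    Nat.card (PerfectMatchings α) = (2 * n - 1)‼ := by
  induction n generalizing α with
  | zero =>
    have : IsEmpty α := by rw [← Finite.card_eq_zero_iff]; simpa using h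
    rw [show (2 * 0 - 1)‼ = 1 from rfl, Nat.card_eq_one_iff_unique]
    exact ⟨⟨fun σ τ => Subtype.ext (Subsingleton.elim _ _)⟩, ⟨⟨1, isEmptyElim⟩⟩⟩
  | succ n ih =>
    classical
    have := Fintype.ofFinite α
    obtain ⟨a⟩ : Nonempty α := by rw [← Finite.card_pos_iff]; omega
    have hpartner (b : ↥({a}ᶜ : Set α)) :
        Nat.card {σ : PerfectMatchings α // σ.1 a = b} = (2 * n - 1)‼ := by
      rw [Nat.card_congr (perfectMatchingsApplyEqEquiv (Ne.symm b.2))]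
      exact ih (Set.ncard_compl_of_ncard_eq_add _ (by rw [Set.ncard_pair (Ne.symm b.2), h]; ring))
    let partner : PerfectMatchings α → ↥({a}ᶜ : Set α) := fun σ => ⟨σ.1 a, σ.2.apply_ne a⟩
    calc Nat.card (PerfectMatchings α)
        = Nat.card (Σ b : ↥({a}ᶜ : Set α), {σ : PerfectMatchings α // σ.1 a = b}) :=
          Nat.card_congr ((Equiv.sigmaFiberEquiv partner).symm.trans
            (Equiv.sigmaCongrRight fun b => Equiv.subtypeEquivRight fun σ => Subtype.ext_iff))
      _ = Nat.card ↥({a}ᶜ : Set α) * (2 * n - 1)‼ := by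
          rw [Nat.card_sigma, Finset.sum_congr rfl fun b _ => hpartner b, Finset.sum_const,
            Finset.card_univ, smul_eq_mul, ← Nat.card_eq_fintype_card]
      _ = (2 * (n + 1) - 1)‼ := by
          rw [Nat.card_coe_set_eq, Set.ncard_compl_of_ncard_eq_add _ (n := 2 * n + 1)
            (by rw [Set.ncard_singleton, h]; ring), show 2 * (n + 1) - 1 = 2 * n + 1 by omega,
            Nat.doubleFactorial_add_one]

theorem card_perfectMatchings_forall_apply_eq_le [Finite α] {ι : Type*} (f g : ι → α) :
    Nat.card {σ : PerfectMatchings α // ∀ i, σ.1 (f i) = g i} ≤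
      Nat.card (PerfectMatchings ↥(Set.range f ∪ Set.range g)ᶜ) := by
  have hmaps (σ : {σ : PerfectMatchings α // ∀ i, σ.1 (f i) = g i}) :
      Set.MapsTo σ.1.1 (Set.range f ∪ Set.range g) (Set.range f ∪ Set.range g) := by
    rintro x (⟨i, rfl⟩ | ⟨i, rfl⟩)
    · exact .inr ⟨i, (σ.2 i).symm⟩
    · exact .inl ⟨i, by rw [← σ.2 i, σ.1.2.apply_apply]⟩
  refine Nat.card_le_card_of_injective (fun σ => σ.1.restrictCompl (hmaps σ)) ?_
  rintro ⟨σ, hσ⟩ ⟨τ, hτ⟩ hστ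
  refine Subtype.ext (Subtype.ext (Equiv.ext fun x => ?_))
  by_cases hx : x ∈ Set.range f ∪ Set.range g
  · rcases hx with ⟨i, rfl⟩ | ⟨i, rfl⟩
    · rw [hσ, hτ]
    · rw [← hσ i, σ.2.apply_apply, hσ i, ← hτ i, τ.2.apply_apply]
  · exact congrArg (fun ρ : PerfectMatchings ↥(Set.range f ∪ Set.range g)ᶜ => (ρ.1 ⟨x, hx⟩ : α))
      hστ

end PerfectMatchings

theorem halfEdge_injective {N2 E : ℕ} :
    Injective (fun q : Fin N2 × Bool => halfEdge N2 E q.1 q.2) := by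
  rintro ⟨j, b⟩ ⟨j', b'⟩ h
  cases b <;> cases b' <;> simp [halfEdge, Fin.ext_iff] at h ⊢ <;> omega

/-- An oriented cycle through vertex `0`: `exit i` names the half-edge by which the cycle leaves
`vertex i`; it enters `vertex i` by the other one. -/
@[ext]
structure CycleData (N2 k : ℕ) (hN : 0 < N2) where
  vertex : ZMod k → Fin N2
  exit : ZMod k → Bool
  injective : Injective vertex
  vertex_zero : vertex 0 = ⟨0, hN⟩

namespace CycleData

variable {N2 E k : ℕ} {hN : 0 < N2}

def Matches (d : CycleData N2 k hN) (σ : Perm (Fin (2 * N2 + 2 * E))) : Prop :=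
  ∀ i, σ (halfEdge N2 E (d.vertex i) (d.exit i)) =
    halfEdge N2 E (d.vertex (i + 1)) (!d.exit (i + 1))

def reverse (d : CycleData N2 k hN) : CycleData N2 k hN where
  vertex i := d.vertex (-i)
  exit i := !d.exit (-i)
  injective := d.injective.comp neg_injective
  vertex_zero := by simpa using d.vertex_zero

theorem reverse_ne (d : CycleData N2 k hN) : d.reverse ≠ d := fun h => by
  simpa [reverse] using congrArg (fun d => d.exit 0) h

theorem Matches.reverse {d : CycleData N2 k hN} {σ : Perm (Fin (2 * N2 + 2 * E))}
    (hσ : σ.IsPerfectMatching) (h : d.Matches σ) : d.reverse.Matches σ := fun i => by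
  have hprev := h (-(i + 1))
  rw [show -(i + 1) + 1 = -i by ring] at hprev
  simp only [CycleData.reverse, Bool.not_not, ← hprev, hσ.apply_apply]

theorem range_union_range_eq (d : CycleData N2 k hN) :
    Set.range (fun i => halfEdge N2 E (d.vertex i) (d.exit i)) ∪
      Set.range (fun i => halfEdge N2 E (d.vertex (i + 1)) (!d.exit (i + 1))) =
    Set.range (fun q : ZMod k × Bool => halfEdge N2 E (d.vertex q.1) q.2) := by
  refine subset_antisymm (Set.union_subset ?_ ?_) ?_
  · rintro _ ⟨i, rfl⟩; exact ⟨(i, d.exit i), rfl⟩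
  · rintro _ ⟨i, rfl⟩; exact ⟨(i + 1, !d.exit (i + 1)), rfl⟩
  · rintro _ ⟨⟨i, c⟩, rfl⟩
    rcases Bool.eq_or_eq_not c (d.exit i) with rfl | rfl
    · exact .inl ⟨i, rfl⟩
    · exact .inr ⟨i - 1, by simp⟩

theorem length_le [NeZero k] (d : CycleData N2 k hN) : k ≤ N2 := by
  simpa using Nat.card_le_card_of_injective _ d.injective

theorem card_matches_le [NeZero k] (d : CycleData N2 k hN) :
    Nat.card {σ : PerfectMatchings (Fin (2 * N2 + 2 * E)) // d.Matches σ.1} ≤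
      (2 * (N2 + E - k) - 1)‼ := by
  refine (card_perfectMatchings_forall_apply_eq_le _ _).trans_eq (card_perfectMatchings ?_)
  have hinj : Injective (fun q : ZMod k × Bool => halfEdge N2 E (d.vertex q.1) q.2) :=
    halfEdge_injective.comp (d.injective.prodMap injective_id)
  rw [Nat.card_coe_set_eq, Set.ncard_compl_of_ncard_eq_add _ (n := 2 * (N2 + E - k))]
  rw [range_union_range_eq, Set.ncard_range_of_injective hinj, Nat.card_prod, Nat.card_zmod,
    Nat.card_eq_fintype_card (α := Bool), Fintype.card_bool, Nat.card_fin]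
  have := d.length_le
  omega

def toEmbeddingProd (d : CycleData N2 k hN) :
    (↥({0}ᶜ : Set (ZMod k)) ↪ ↥({⟨0, hN⟩}ᶜ : Set (Fin N2))) × (ZMod k → Bool) :=
  (⟨fun i => ⟨d.vertex i, fun h => i.2 (d.injective (h.trans d.vertex_zero.symm))⟩,
    fun _ _ h => Subtype.ext (d.injective (congrArg Subtype.val h))⟩, d.exit)

theorem toEmbeddingProd_injective :
    Injective (toEmbeddingProd (N2 := N2) (k := k) (hN := hN)) := by
  intro d d' h
  have hvertex (i : ZMod k) (hi : i ≠ 0) : d.vertex i = d'.vertex i :=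
    congrArg (fun e => (e.1 ⟨i, hi⟩ : Fin N2)) h
  ext1
  · funext i
    by_cases hi : i = 0
    · rw [hi, d.vertex_zero, d'.vertex_zero]
    · exact hvertex i hi
  · exact congrArg Prod.snd h

instance [NeZero k] : Finite (CycleData N2 k hN) :=
  .of_injective _ toEmbeddingProd_injective

theorem card_le_two_pow_mul_descFactorial [NeZero k] :
    Nat.card (CycleData N2 k hN) ≤ 2 ^ k * (N2 - 1).descFactorial (k - 1) := by
  classical
  refine (Nat.card_le_card_of_injective _ toEmbeddingProd_injective).trans_eq ?_
  rw [Nat.card_eq_fintype_card, Fintype.card_prod, Fintype.card_embedding_eq]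
  simp [mul_comm, Finset.filter_ne', Finset.card_erase_of_mem]

end CycleData

section Event

variable {N2 E k : ℕ} {hN : 0 < N2}

theorem OnDisjointCycle.exists_cycleData {σ : Perm (Fin (2 * N2 + 2 * E))}
    (h : OnDisjointCycle N2 E k hN σ) : ∃ d : CycleData N2 k hN, d.Matches σ :=
  let ⟨w, b, hw, hw0, hσ⟩ := h
  ⟨⟨w, b, hw, hw0⟩, hσ⟩

theorem two_mul_card_onDisjointCycle_le [NeZero k] :
    2 * Nat.card {σ : Perm (Fin (2 * N2 + 2 * E)) //
        IsMatching σ ∧ OnDisjointCycle N2 E k hN σ} ≤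
      Nat.card (CycleData N2 k hN) * (2 * (N2 + E - k) - 1)‼ := by
  classical
  let _ := Fintype.ofFinite (CycleData N2 k hN)
  have := Finset.card_mul_le_card_mul (s := Finset.univ) (t := Finset.univ) (m := 2)
    (n := (2 * (N2 + E - k) - 1)‼) (fun (σ : {σ : Perm (Fin (2 * N2 + 2 * E)) //
      IsMatching σ ∧ OnDisjointCycle N2 E k hN σ}) (d : CycleData N2 k hN) => d.Matches σ.1) ?_ ?_
  · simpa [Nat.card_eq_fintype_card, mul_comm] using this
  · rintro ⟨σ, hσ, hcycle⟩ -
    obtain ⟨d, hd⟩ := hcycle.exists_cycleData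
    exact Finset.one_lt_card.2 ⟨d.reverse, by simpa using hd.reverse hσ, d, by simpa using hd,
      d.reverse_ne⟩
  · intro d _
    calc _ = Nat.card {σ : {σ : Perm (Fin (2 * N2 + 2 * E)) //
              IsMatching σ ∧ OnDisjointCycle N2 E k hN σ} // d.Matches σ.1} := by
          simp [Finset.bipartiteBelow, Nat.card_eq_fintype_card, Fintype.card_subtype]
      _ ≤ Nat.card {σ : PerfectMatchings (Fin (2 * N2 + 2 * E)) // d.Matches σ.1} :=
          Nat.card_le_card_of_injective (fun σ => ⟨⟨σ.1.1, σ.1.2.1⟩, σ.2⟩)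
            fun σ τ h => Subtype.ext (Subtype.ext (congrArg (·.1.1) h))
      _ ≤ _ := d.card_matches_le

theorem card_onDisjointCycle_le (m : ℕ) :
    Nat.card {σ : Perm (Fin (2 * N2 + 2 * E)) //
        IsMatching σ ∧ OnDisjointCycle N2 E (m + 1) hN σ} ≤
      2 ^ m * (N2 - 1).descFactorial m * (2 * (N2 + E - (m + 1)) - 1)‼ := by
  have h := (two_mul_card_onDisjointCycle_le (E := E) (k := m + 1) (hN := hN)).trans
    (Nat.mul_le_mul_right _ CycleData.card_le_two_pow_mul_descFactorial)
  rw [pow_succ, Nat.add_sub_cancel] at h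
  linarith

end Event

theorem doubleFactorial_eq_prod_mul {M k : ℕ} (h : k ≤ M) :
    ((2 * M - 1)‼ : ℝ) =
      (∏ j ∈ Finset.range k, (2 * (M : ℝ) - 2 * j - 1)) * (2 * (M - k) - 1)‼ := by
  induction k with
  | zero => simp
  | succ k ih =>
    obtain ⟨r, hr⟩ : ∃ r, M - k = r + 1 := ⟨M - k - 1, by omega⟩
    have hr' : (r : ℝ) = M - k - 1 := by
      rw [show r = M - k - 1 by omega, Nat.cast_sub (by omega), Nat.cast_sub (by omega)]
      simp
    rw [ih (by omega), Finset.prod_range_succ, hr, show M - (k + 1) = r by omega,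
      show 2 * (r + 1) - 1 = 2 * r + 1 by omega, Nat.doubleFactorial_add_one]
    push_cast
    rw [hr']
    ring

theorem card_isMatching_eq {N2 E k : ℕ} (h : k ≤ N2 + E) :
    (Nat.card {σ : Perm (Fin (2 * N2 + 2 * E)) // IsMatching σ} : ℝ) =
      (∏ j ∈ Finset.range k, (2 * (N2 : ℝ) + 2 * E - 2 * j - 1)) * (2 * (N2 + E - k) - 1)‼ := by
  rw [show Nat.card {σ : Perm (Fin (2 * N2 + 2 * E)) // IsMatching σ} =
      Nat.card (PerfectMatchings (Fin (2 * N2 + 2 * E))) from rfl,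
    card_perfectMatchings (n := N2 + E) (by simp; ring), doubleFactorial_eq_prod_mul h]
  simp only [Nat.cast_add, mul_add]

theorem two_pow_mul_descFactorial_le {n m : ℕ} (h : m < n) :
    (2 : ℝ) ^ m * (n - 1).descFactorial m ≤ ∏ j ∈ Finset.range m, (2 * (n : ℝ) - 2 * j - 1) := by
  have htwo : (2 : ℝ) ^ m = ∏ _j ∈ Finset.range m, (2 : ℝ) := by simp
  rw [htwo, Nat.descFactorial_eq_prod_range, Nat.cast_prod, ← Finset.prod_mul_distrib]
  refine Finset.prod_le_prod (fun j _ => by positivity) fun j hj => ?_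
  have hj : j < m := Finset.mem_range.1 hj
  rw [Nat.cast_sub (by omega), Nat.cast_sub (by omega)]
  push_cast
  linarith

theorem one_div_mul_prod_div_eq (x y : ℝ) (m : ℕ) :
    1 / (y - 1) * ∏ j ∈ Finset.range m, ((x - 2 * j - 1) / (y - 2 * j - 3)) =
      (∏ j ∈ Finset.range m, (x - 2 * j - 1)) / ∏ j ∈ Finset.range (m + 1), (y - 2 * j - 1) := by
  have hshift : ∏ j ∈ Finset.range m, (y - 2 * ((j + 1 : ℕ) : ℝ) - 1) =
      ∏ j ∈ Finset.range m, (y - 2 * j - 3) :=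
    Finset.prod_congr rfl fun j _ => by push_cast; ring
  rw [Finset.prod_range_succ', Finset.prod_div_distrib, hshift, Nat.cast_zero]
  simp only [div_eq_mul_inv, mul_inv]
  ring

/-- The probability (under the uniform perfect matching of the `2N₂ + 2E` half-edges)
that the fixed degree-2 vertex `0` lies on a disjoint cycle of length `k` is at most
`(1/(2N₂+2E-1)) ∏_{j=0}^{k-2} (2N₂-2j-1)/(2N₂+2E-2j-3)`. -/
theorem prob_on_cycle_le (N2 E k : ℕ) (hN : 0 < N2) (hk : 1 ≤ k) (hkN : k ≤ N2) :
    (Nat.card {σ : Equiv.Perm (Fin (2 * N2 + 2 * E)) //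
        IsMatching σ ∧ OnDisjointCycle N2 E k hN σ} : ℝ) /
      (Nat.card {σ : Equiv.Perm (Fin (2 * N2 + 2 * E)) // IsMatching σ}) ≤
    (1 / (2 * (N2 : ℝ) + 2 * E - 1)) *
      ∏ j ∈ Finset.range (k - 1),
        ((2 * (N2 : ℝ) - 2 * j - 1) / (2 * (N2 : ℝ) + 2 * (E : ℝ) - 2 * j - 3)) := by
  obtain ⟨m, rfl⟩ : ∃ m, k = m + 1 := ⟨k - 1, by omega⟩
  have hA : (Nat.card {σ : Equiv.Perm (Fin (2 * N2 + 2 * E)) //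
      IsMatching σ ∧ OnDisjointCycle N2 E (m + 1) hN σ} : ℝ) ≤
      2 ^ m * (N2 - 1).descFactorial m * (2 * (N2 + E - (m + 1)) - 1)‼ := by
    exact_mod_cast card_onDisjointCycle_le m
  have hP : 0 < ∏ j ∈ Finset.range (m + 1), (2 * (N2 : ℝ) + 2 * E - 2 * j - 1) :=
    Finset.prod_pos fun j hj => by
      have : (j : ℝ) + 1 ≤ N2 := by exact_mod_cast (Finset.mem_range.1 hj).trans_le hkN
      linarith [(E.cast_nonneg : (0 : ℝ) ≤ E)]
  have hΩ : (0 : ℝ) < (2 * (N2 + E - (m + 1)) - 1)‼ := Nat.cast_pos.2 (Nat.doubleFactorial_pos _)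
  rw [Nat.add_sub_cancel, one_div_mul_prod_div_eq, card_isMatching_eq (k := m + 1) (by omega),
    div_le_div_iff₀ (mul_pos hP hΩ) hP]
  calc _ ≤ 2 ^ m * ((N2 - 1).descFactorial m : ℝ) * (2 * (N2 + E - (m + 1)) - 1)‼ * _ := by
        gcongr
    _ ≤ (∏ j ∈ Finset.range m, (2 * (N2 : ℝ) - 2 * j - 1)) * (2 * (N2 + E - (m + 1)) - 1)‼ * _ := by
        gcongr
        exact two_pow_mul_descFactorial_le (by omega)
    _ = _ := by ring
end
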